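/- arXiv:2212.10951 — 11 statements merged into one kernel-verified Lean document; each statement's English description precedes it below -/
import Mathlib

section
/- Let α > 0 and 0 < γ < 1, and let g_{α,γ} : ℕ → ℕ be given by g_{α,γ}(n) = ⌊αn + γ⌋. If A ⊆ ℕ satisfies ∑_{n∈A} 1/n = ∞, then the image set g_{α,γ}[A] = {g_{α,γ}(n) : n ∈ A} satisfies ∑_{m ∈ g_{α,γ}[A]} 1/m = ∞. -/
/-- The nonhomogeneous spectrum map `g_{α,γ}(n) = ⌊α n + γ⌋`. -/
noncomputable def spectrumMap (α γ : ℝ) (n : ℕ) : ℕ := ⌊α * n + γ⌋₊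

theorem spectra_of_HSD (α γ : ℝ) (hα : 0 < α) (hγ0 : 0 < γ) (hγ1 : γ < 1)
    (A : Set ℕ) (hA : ¬ Summable fun n : A => (1 : ℝ) / ((n : ℕ) : ℝ)) :
    ¬ Summable fun m : (spectrumMap α γ '' A) => (1 : ℝ) / ((m : ℕ) : ℝ) := by
  intro hsum
  apply hA
  set g : ℕ → ℕ := spectrumMap α γ with hg
  have hnn : ∀ n : ℕ, (0:ℝ) ≤ α * n + γ := fun n => by positivity
  have gb1 : ∀ n : ℕ, (g n : ℝ) ≤ α * n + γ := fun n => Nat.floor_le (hnn n)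
  have gb2 : ∀ n : ℕ, α * n + γ < g n + 1 := fun n => Nat.lt_floor_add_one _
  set K : ℕ := ⌈1/α⌉₊ with hK
  set M : ℕ := ⌈(1-γ)/α⌉₊ + 1 with hMdef
  -- For n ≥ M, both n and g n are at least 1
  have hM : ∀ n : ℕ, M ≤ n → 1 ≤ g n ∧ 1 ≤ n := by
    intro n hn
    have h1 : ((1-γ)/α : ℝ) < n := by
      calc ((1-γ)/α : ℝ) ≤ ⌈(1-γ)/α⌉₊ := Nat.le_ceil _
        _ < n := by exact_mod_cast Nat.lt_of_lt_of_le (Nat.lt_succ_self _) hn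
    have h2 : (1:ℝ) ≤ α * n + γ := by
      rw [div_lt_iff₀ hα] at h1
      nlinarith
    constructor
    · exact Nat.le_floor (by exact_mod_cast h2)
    · omega
  -- fiber bound: two elements of a fiber differ by at most K
  have hfib : ∀ n₁ n₂ : ℕ, n₁ ≤ n₂ → g n₁ = g n₂ → n₂ ≤ n₁ + K := by
    intro n₁ n₂ hle he
    have h1 : α * n₂ + γ < (g n₁ : ℝ) + 1 := he ▸ gb2 n₂
    have h2 : (g n₁ : ℝ) ≤ α * n₁ + γ := gb1 n₁
    have h3 : α * (n₂ - n₁ : ℕ) < 1 := by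
      push_cast [Nat.cast_sub hle]
      nlinarith
    have h4 : ((n₂ - n₁ : ℕ) : ℝ) < 1 / α := by
      rw [lt_div_iff₀ hα]; nlinarith
    have h5 : (n₂ - n₁ : ℕ) ≤ K := by
      have := h4.le.trans (Nat.le_ceil (1/α))
      exact_mod_cast this
    omega
  -- counting function: number of earlier elements in the same fiber
  set c : ℕ → ℕ := fun n => (Finset.filter (fun k => g k = g n) (Finset.range n)).card
    with hc
  have hcK : ∀ n, c n ≤ K := by
    intro n
    have hsub : (Finset.filter (fun k => g k = g n) (Finset.range n)) ⊆
        Finset.Ico (n - K) n := by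
      intro k hk
      simp only [Finset.mem_filter, Finset.mem_range] at hk
      have := hfib k n hk.1.le hk.2
      simp only [Finset.mem_Ico]
      omega
    calc c n ≤ (Finset.Ico (n - K) n).card := Finset.card_le_card hsub
      _ = n - (n - K) := Nat.card_Ico _ _
      _ ≤ K := by omega
  -- g is injective on each level set of c
  have hkey : ∀ n₁ n₂ : ℕ, n₁ < n₂ → g n₁ = g n₂ → c n₁ < c n₂ := by
    intro n₁ n₂ hlt he
    have hsub : insert n₁ (Finset.filter (fun k => g k = g n₁) (Finset.range n₁)) ⊆
        Finset.filter (fun k => g k = g n₂) (Finset.range n₂) := by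
      intro k hk
      rcases Finset.mem_insert.mp hk with rfl | hk
      · simp [Finset.mem_filter, Finset.mem_range, hlt, he]
      · simp only [Finset.mem_filter, Finset.mem_range] at hk ⊢
        exact ⟨hk.1.trans hlt, hk.2.trans he⟩
    have h1 : (insert n₁ (Finset.filter (fun k => g k = g n₁) (Finset.range n₁))).card
        = c n₁ + 1 := by
      rw [Finset.card_insert_of_notMem (by simp [Finset.mem_range])]
    have h2 := Finset.card_le_card hsub
    have h3 : c n₂ = (Finset.filter (fun k => g k = g n₂) (Finset.range n₂)).card := rfl
    omega
  have hSinj : ∀ r : ℕ, Set.InjOn g {n | c n = r} := by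
    intro r n₁ h₁ n₂ h₂ he
    simp only [Set.mem_setOf_eq] at h₁ h₂
    rcases lt_trichotomy n₁ n₂ with h | h | h
    · have := hkey _ _ h he; omega
    · exact h
    · have := hkey _ _ h he.symm; omega
  -- the target function
  set f : ℕ → ℝ := fun n => 1 / (n : ℝ) with hf
  have hf0 : ∀ n, 0 ≤ f n := fun n => by positivity
  -- slices
  set T : ℕ → Set ℕ := fun r => A ∩ {n | M ≤ n} ∩ {n | c n = r} with hT
  -- each slice is summable
  have hTsum : ∀ r : ℕ, Summable ((T r).indicator f) := by
    intro r
    rw [← summable_subtype_iff_indicator]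
    have hmem : ∀ n : T r, g (n : ℕ) ∈ spectrumMap α γ '' A := by
      rintro ⟨n, ⟨⟨hnA, -⟩, -⟩⟩
      exact ⟨n, hnA, rfl⟩
    set e : T r → (spectrumMap α γ '' A) := fun n => ⟨g (n : ℕ), hmem n⟩ with he
    have hainj : Function.Injective e := by
      rintro ⟨n₁, hn₁⟩ ⟨n₂, hn₂⟩ hq
      have hgeq : g n₁ = g n₂ := by
        have := congrArg Subtype.val hq
        simpa [he] using this
      exact Subtype.ext (hSinj r hn₁.2 hn₂.2 hgeq)
    have hcomp : Summable ((fun m : (spectrumMap α γ '' A) => (1:ℝ) / ((m : ℕ) : ℝ)) ∘ e) :=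
      hsum.comp_injective hainj
    have hcomp' : Summable (fun n : T r => (α+1) * ((1:ℝ) / (g (n:ℕ) : ℝ))) := by
      apply Summable.mul_left
      exact hcomp
    apply Summable.of_nonneg_of_le (fun n => hf0 _) _ hcomp'
    rintro ⟨n, ⟨⟨-, hnM⟩, -⟩⟩
    simp only [Set.mem_setOf_eq] at hnM
    obtain ⟨hg1, hn1⟩ := hM n hnM
    have hgpos : (0:ℝ) < g n := by exact_mod_cast hg1
    have hnpos : (0:ℝ) < n := by exact_mod_cast hn1
    have hb : (g n : ℝ) ≤ (α + 1) * n := by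
      have h1 : (g n : ℝ) ≤ α * n + γ := gb1 n
      have : (1:ℝ) ≤ n := by exact_mod_cast hn1
      nlinarith
    have hdiv : (1:ℝ)/n ≤ (α+1)/(g n) := by
      rw [div_le_div_iff₀ hnpos hgpos]
      nlinarith
    show (1:ℝ)/n ≤ (α+1) * (1/(g n : ℝ))
    rw [mul_one_div]
    exact hdiv
  -- the small part is summable (finite support)
  have hsmall : Summable ((A ∩ {n | n < M}).indicator f) := by
    apply summable_of_ne_finset_zero (s := Finset.range M)
    intro n hn
    simp only [Finset.mem_range, not_lt] at hn
    apply Set.indicator_of_notMem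
    intro hmem
    simp only [Set.mem_inter_iff, Set.mem_setOf_eq] at hmem
    omega
  -- total dominating function
  have hdom : Summable (fun n => (A ∩ {n | n < M}).indicator f n
      + ∑ r ∈ Finset.range (K+1), (T r).indicator f n) :=
    hsmall.add (summable_sum fun r _ => hTsum r)
  have hAsum : Summable (A.indicator f) := by
    apply Summable.of_nonneg_of_le (fun n => Set.indicator_nonneg (fun n _ => hf0 n) n) _ hdom
    intro n
    by_cases hnA : n ∈ A
    · rw [Set.indicator_of_mem hnA]
      by_cases hnM : n < M
      · have h1 : (A ∩ {n | n < M}).indicator f n = f n :=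
          Set.indicator_of_mem (Set.mem_inter hnA (show n ∈ {n | n < M} from hnM)) f
        have h2 : 0 ≤ ∑ r ∈ Finset.range (K+1), (T r).indicator f n :=
          Finset.sum_nonneg fun r _ => Set.indicator_nonneg (fun n _ => hf0 n) n
        linarith
      · push_neg at hnM
        have hmem : n ∈ T (c n) := Set.mem_inter (Set.mem_inter hnA (show n ∈ {n | M ≤ n} from hnM)) rfl
        have h1 : (T (c n)).indicator f n = f n := Set.indicator_of_mem hmem f
        have h2 : f n ≤ ∑ r ∈ Finset.range (K+1), (T r).indicator f n := by
          rw [← h1]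
          apply Finset.single_le_sum
            (fun r _ => Set.indicator_nonneg (fun n _ => hf0 n) n)
          simp only [Finset.mem_range]
          exact Nat.lt_succ_of_le (hcK n)
        have h3 : 0 ≤ (A ∩ {n | n < M}).indicator f n :=
          Set.indicator_nonneg (fun n _ => hf0 n) n
        linarith
    · rw [Set.indicator_of_notMem hnA]
      have h2 : 0 ≤ ∑ r ∈ Finset.range (K+1), (T r).indicator f n :=
        Finset.sum_nonneg fun r _ => Set.indicator_nonneg (fun n _ => hf0 n) n
      have h3 : 0 ≤ (A ∩ {n | n < M}).indicator f n :=
        Set.indicator_nonneg (fun n _ => hf0 n) n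
      linarith
  exact summable_subtype_iff_indicator.mpr hAsum
end

section
/- Let α > 0 and 0 < γ < 1. If A ⊆ ℕ has positive upper Banach density, i.e. there exists β > 0 such that for every k ∈ ℕ there are m < n in ℕ with n − m ≥ k and |A ∩ {m+1,…,n}| ≥ β(n − m), then the image g_{α,γ}[A] = {⌊αn + γ⌋ : n ∈ A} also has positive upper Banach density. -/
set_option maxHeartbeats 1000000


/-- `A ⊆ ℕ` has positive upper Banach density. -/
def PosUpperBanachDensity (A : Set ℕ) : Prop :=
  ∃ β : ℝ, 0 < β ∧ ∀ k : ℕ, ∃ m n : ℕ, m < n ∧ k ≤ n - m ∧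
    β * ((n : ℝ) - (m : ℝ)) ≤ (Nat.card ↥(A ∩ Set.Icc (m + 1) n) : ℝ)

lemma spectrumMap_mono (α γ : ℝ) (hα : 0 ≤ α) {a b : ℕ} (h : a ≤ b) :
    spectrumMap α γ a ≤ spectrumMap α γ b := by
  apply Nat.floor_mono
  have : (a : ℝ) ≤ (b : ℝ) := by exact_mod_cast h
  nlinarith

lemma spectrumMap_fiber_card (α γ : ℝ) (hα : 0 < α) (hγ : 0 ≤ γ) (S : Finset ℕ) (v : ℕ) :
    (S.filter (fun a => spectrumMap α γ a = v)).card ≤ ⌊1/α⌋₊ + 1 := by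
  set F := S.filter (fun a => spectrumMap α γ a = v) with hF
  rcases F.eq_empty_or_nonempty with h | h
  · simp [h]
  · set a₀ := F.min' h with ha₀
    have ha₀F : a₀ ∈ F := F.min'_mem h
    have hga₀ : spectrumMap α γ a₀ = v := (Finset.mem_filter.mp ha₀F).2
    have hsub : F ⊆ Finset.Icc a₀ (a₀ + ⌊1/α⌋₊) := by
      intro b hb
      have hgb : spectrumMap α γ b = v := (Finset.mem_filter.mp hb).2
      have h1 : a₀ ≤ b := F.min'_le b hb
      have h1' : (a₀ : ℝ) ≤ (b : ℝ) := by exact_mod_cast h1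
      have h2 : (v : ℝ) ≤ α * a₀ + γ := by
        rw [← hga₀]
        exact Nat.floor_le (by positivity)
      have h3 : α * b + γ < v + 1 := by
        rw [← hgb]
        exact Nat.lt_floor_add_one _
      have h4 : ((b - a₀ : ℕ) : ℝ) ≤ 1/α := by
        rw [Nat.cast_sub h1, le_div_iff₀ hα]
        nlinarith
      have h5 : b - a₀ ≤ ⌊1/α⌋₊ := Nat.le_floor h4
      exact Finset.mem_Icc.mpr ⟨h1, by omega⟩
    calc F.card ≤ (Finset.Icc a₀ (a₀ + ⌊1/α⌋₊)).card := Finset.card_le_card hsub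
      _ = ⌊1/α⌋₊ + 1 := by rw [Nat.card_Icc]; omega

theorem spectra_of_PUBD (α γ : ℝ) (hα : 0 < α) (hγ0 : 0 < γ) (hγ1 : γ < 1)
    (A : Set ℕ) (hA : PosUpperBanachDensity A) :
    PosUpperBanachDensity (spectrumMap α γ '' A) := by
  obtain ⟨β, hβ, hd⟩ := hA
  set C : ℕ := ⌊1/α⌋₊ + 1 with hC
  have hc1 : (1 : ℝ) ≤ (C : ℝ) := by exact_mod_cast Nat.one_le_iff_ne_zero.mpr (by omega)
  have hc0 : (0 : ℝ) < (C : ℝ) := by linarith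
  refine ⟨β / (2 * C * (α + 3)), by positivity, ?_⟩
  intro k
  obtain ⟨m, n, hmn, hk₀, hcard⟩ := hd (⌈2 * C / β⌉₊ + ⌈((k : ℝ) + α + 2) / α⌉₊)
  have hnmR : ((⌈2 * C / β⌉₊ + ⌈((k : ℝ) + α + 2) / α⌉₊ : ℕ) : ℝ) ≤ (n : ℝ) - m := by
    have h2 : ((n - m : ℕ) : ℝ) = (n : ℝ) - m := by rw [Nat.cast_sub hmn.le]
    rw [← h2]; exact_mod_cast hk₀
  have h1 : 2 * C / β ≤ (n : ℝ) - m := by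
    calc 2 * C / β ≤ (⌈2 * C / β⌉₊ : ℝ) := Nat.le_ceil _
      _ ≤ _ := by
        refine le_trans ?_ hnmR
        exact_mod_cast Nat.le_add_right ⌈2 * C / β⌉₊ ⌈((k : ℝ) + α + 2) / α⌉₊
  have h2 : (k : ℝ) + α + 2 ≤ α * ((n : ℝ) - m) := by
    have h2a : ((k : ℝ) + α + 2) / α ≤ (n : ℝ) - m := by
      calc ((k : ℝ) + α + 2) / α ≤ (⌈((k : ℝ) + α + 2) / α⌉₊ : ℝ) := Nat.le_ceil _
        _ ≤ _ := by
          refine le_trans ?_ hnmR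
          exact_mod_cast Nat.le_add_left ⌈((k : ℝ) + α + 2) / α⌉₊ ⌈2 * C / β⌉₊
    rw [div_le_iff₀ hα] at h2a
    nlinarith
  have hnm1 : (1 : ℝ) ≤ (n : ℝ) - m := by
    have : (m : ℝ) + 1 ≤ n := by exact_mod_cast hmn
    linarith
  set N : ℕ := spectrumMap α γ n with hN
  set M : ℕ := spectrumMap α γ (m + 1) - 1 with hM
  have hm1 : ((m + 1 : ℕ) : ℝ) = (m : ℝ) + 1 := by push_cast; ring
  have hgn_ub : (N : ℝ) ≤ α * n + γ := Nat.floor_le (by positivity)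
  have hgn_lb : α * n + γ < (N : ℝ) + 1 := Nat.lt_floor_add_one _
  have hgm_ub : (spectrumMap α γ (m + 1) : ℝ) ≤ α * ((m : ℝ) + 1) + γ := by
    rw [← hm1]; exact Nat.floor_le (by positivity)
  have hgm_lb : α * ((m : ℝ) + 1) + γ < (spectrumMap α γ (m + 1) : ℝ) + 1 := by
    rw [← hm1]; exact Nat.lt_floor_add_one _
  have hM_lb : (spectrumMap α γ (m + 1) : ℝ) - 1 ≤ (M : ℝ) := by
    rw [hM]
    rcases Nat.eq_zero_or_pos (spectrumMap α γ (m + 1)) with h | h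
    · simp [h]
    · rw [Nat.cast_sub h]; simp
  have hM_ub : (M : ℝ) ≤ (spectrumMap α γ (m + 1) : ℝ) := by
    exact_mod_cast Nat.sub_le _ _
  have hexp1 : α * ((n : ℝ) - m) = α * (n : ℝ) - α * (m : ℝ) := by ring
  have hexp2 : α * ((m : ℝ) + 1) = α * (m : ℝ) + α := by ring
  have hexp3 : (α + 3) * ((n : ℝ) - m) = α * (n : ℝ) - α * (m : ℝ) + 3 * ((n : ℝ) - m) := by ring
  have hNM_lb : (k : ℝ) + 1 ≤ (N : ℝ) - M := by linarith
  have hNM_ub : (N : ℝ) - M ≤ (α + 3) * ((n : ℝ) - m) := by linarith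
  have hMN : M < N := by
    have hk0 : (0 : ℝ) ≤ (k : ℝ) := Nat.cast_nonneg k
    have : (M : ℝ) < N := by linarith
    exact_mod_cast this
  have hkNM : k ≤ N - M := by
    have : (k : ℝ) ≤ ((N - M : ℕ) : ℝ) := by
      rw [Nat.cast_sub hMN.le]; linarith
    exact_mod_cast this
  refine ⟨M, N, hMN, hkNM, ?_⟩
  -- cardinality arguments
  have hfinA : (A ∩ Set.Icc (m + 1) n).Finite :=
    (Set.finite_Icc _ _).inter_of_right A
  set S : Finset ℕ := hfinA.toFinset with hS
  have hScard : (Nat.card ↥(A ∩ Set.Icc (m + 1) n) : ℝ) = (S.card : ℝ) := by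
    rw [Nat.card_coe_set_eq, Set.ncard_eq_toFinset_card _ hfinA]
  set T : Finset ℕ := S.image (spectrumMap α γ) with hT
  have hST : S.card ≤ C * T.card :=
    Finset.card_le_mul_card_image S C (fun v _ => spectrumMap_fiber_card α γ hα hγ0.le S v)
  -- target set
  have hfinB : ((spectrumMap α γ '' A) ∩ Set.Icc (M + 1) N).Finite :=
    (Set.finite_Icc _ _).inter_of_right _
  have hsubB : (↑(T.erase 0) : Set ℕ) ⊆ (spectrumMap α γ '' A) ∩ Set.Icc (M + 1) N := by
    intro v hv
    simp only [Finset.coe_erase, Set.mem_diff, Finset.mem_coe, Set.mem_singleton_iff] at hv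
    obtain ⟨hvT, hv0⟩ := hv
    obtain ⟨a, haS, hva⟩ := Finset.mem_image.mp hvT
    have haA : a ∈ A ∩ Set.Icc (m + 1) n := hfinA.mem_toFinset.mp haS
    have haA' : a ∈ A := haA.1
    have hIcc := Set.mem_Icc.mp haA.2
    have ham : m + 1 ≤ a := hIcc.1
    have han : a ≤ n := hIcc.2
    refine ⟨⟨a, haA', hva⟩, ?_, hva ▸ spectrumMap_mono α γ hα.le han⟩
    have hge1 : spectrumMap α γ (m + 1) ≤ v := hva ▸ spectrumMap_mono α γ hα.le ham
    have hge2 : 1 ≤ v := Nat.one_le_iff_ne_zero.mpr hv0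
    omega
  have hcount : ((T.erase 0).card : ℝ) ≤
      (Nat.card ↥((spectrumMap α γ '' A) ∩ Set.Icc (M + 1) N) : ℝ) := by
    rw [Nat.card_coe_set_eq]
    exact_mod_cast (Set.ncard_coe_finset (T.erase 0)) ▸ Set.ncard_le_ncard hsubB hfinB
  have hTe : (T.card : ℝ) - 1 ≤ ((T.erase 0).card : ℝ) := by
    have h2 : T.card - 1 ≤ (T.erase 0).card := Finset.pred_card_le_card_erase
    rcases Nat.eq_zero_or_pos T.card with h | h
    · rw [h]
      have : (0 : ℝ) ≤ ((T.erase 0).card : ℝ) := Nat.cast_nonneg _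
      push_cast
      linarith
    · have hcast : ((T.card - 1 : ℕ) : ℝ) = (T.card : ℝ) - 1 := by
        rw [Nat.cast_sub h]; simp
      rw [← hcast]; exact_mod_cast h2
  -- arithmetic finish
  set count := (Nat.card ↥((spectrumMap α γ '' A) ∩ Set.Icc (M + 1) N) : ℝ) with hcountdef
  have e1 : β * ((n : ℝ) - m) - (C : ℝ) ≤ (C : ℝ) * count := by
    have hSc : β * ((n : ℝ) - m) ≤ (S.card : ℝ) := hScard ▸ hcard
    have hSTR : (S.card : ℝ) ≤ (C : ℝ) * (T.card : ℝ) := by exact_mod_cast hST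
    nlinarith [hTe, hcount]
  have hβnm : 2 * (C : ℝ) ≤ β * ((n : ℝ) - m) := by
    rw [div_le_iff₀ hβ] at h1
    linarith
  rw [div_mul_eq_mul_div, div_le_iff₀ (by positivity)]
  nlinarith [mul_nonneg hβ.le (sub_nonneg.mpr hNM_ub),
    mul_nonneg (by linarith : (0:ℝ) ≤ α + 3) (by linarith : (0:ℝ) ≤ (C : ℝ) * count - (β * ((n : ℝ) - m) - C)),
    mul_nonneg (by linarith : (0:ℝ) ≤ α + 3) (by linarith : (0:ℝ) ≤ β * ((n : ℝ) - m) - 2 * C)]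
end

section
/- Let α > 0 and 0 < γ < 1. If A ⊆ ℕ is piecewise syndetic, then the image g_{α,γ}[A] = {⌊αn + γ⌋ : n ∈ A} is piecewise syndetic. -/
/-- `A ⊆ ℕ` is piecewise syndetic: there is a finite nonempty `G ⊆ ℕ` such that for
every finite `F ⊆ ℕ` there is `x` with `F + x ⊆ ⋃_{t ∈ G} (-t + A)`. -/
def PiecewiseSyndetic (A : Set ℕ) : Prop :=
  ∃ G : Finset ℕ, G.Nonempty ∧
    ∀ F : Finset ℕ, ∃ x : ℕ, ∀ s ∈ F, ∃ t ∈ G, t + (s + x) ∈ A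

theorem spectra_of_PS (α γ : ℝ) (hα : 0 < α) (hγ0 : 0 < γ) (hγ1 : γ < 1)
    (A : Set ℕ) (hA : PiecewiseSyndetic A) :
    PiecewiseSyndetic (spectrumMap α γ '' A) := by
  obtain ⟨G, hGne, hG⟩ := hA
  set g : ℕ := G.max' hGne with hg
  set D : ℕ := ⌈α * (g + 1)⌉₊ + 2 with hD
  refine ⟨Finset.range (D + 1), by simp, ?_⟩
  intro F
  obtain ⟨x, hx⟩ := hG (F.image (fun s' : ℕ => ⌈((s' : ℝ) + 1) / α⌉₊))
  set x' : ℕ := ⌊α * x + γ⌋₊ with hx'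
  refine ⟨x', ?_⟩
  intro s' hs'
  set s : ℕ := ⌈((s' : ℝ) + 1) / α⌉₊ with hs
  obtain ⟨t, htG, hta⟩ := hx s (Finset.mem_image_of_mem _ hs')
  have htg : t ≤ g := Finset.le_max' G t htG
  have hx'le : (x' : ℝ) ≤ α * x + γ := Nat.floor_le (by positivity)
  have hx'lt : α * x + γ < x' + 1 := Nat.lt_floor_add_one _
  have hαs : (s' : ℝ) + 1 ≤ α * s := by
    have h := Nat.le_ceil (((s' : ℝ) + 1) / α)
    rw [div_le_iff₀ hα] at h
    linarith [h]
  have hαs' : α * s < (s' : ℝ) + 1 + α := by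
    have h := Nat.ceil_lt_add_one (show (0 : ℝ) ≤ ((s' : ℝ) + 1) / α by positivity)
    have h2 : α * s < α * (((s' : ℝ) + 1) / α + 1) := by
      exact (mul_lt_mul_iff_right₀ hα).mpr h
    rw [mul_add, mul_div_cancel₀ _ (hα.ne')] at h2
    linarith
  set v : ℕ := ⌊α * (t + (s + x) : ℕ) + γ⌋₊ with hv
  have hva : α * ((t + (s + x) : ℕ) : ℝ) + γ = α * t + α * s + α * x + γ := by
    push_cast; ring
  have hlow : x' + s' ≤ v := by
    apply Nat.le_floor
    rw [hva]
    have ht0 : (0 : ℝ) ≤ α * t := by positivity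
    push_cast
    linarith
  have hDge : α * (g + 1) ≤ (D : ℝ) - 2 := by
    have := Nat.le_ceil (α * ((g : ℝ) + 1))
    rw [hD]; push_cast; linarith
  have hhigh : v ≤ x' + s' + D := by
    have h1 : (v : ℝ) ≤ α * (t + (s + x) : ℕ) + γ := Nat.floor_le (by positivity)
    rw [hva] at h1
    have htg' : α * t ≤ α * g := by
      apply mul_le_mul_of_nonneg_left _ (le_of_lt hα)
      exact_mod_cast htg
    have : (v : ℝ) ≤ (x' : ℝ) + s' + D := by
      push_cast at hDge ⊢
      linarith
    exact_mod_cast this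
  refine ⟨v - (x' + s'), ?_, ?_⟩
  · simp only [Finset.mem_range]; omega
  · have heq : v - (x' + s') + (s' + x') = v := by omega
    rw [heq]
    exact ⟨t + (s + x), hta, rfl⟩
end

section
/- Let α > 0 and 0 < γ < 1. If A ⊆ ℕ contains arithmetic progressions of arbitrary finite length, then the image g_{α,γ}[A] = {⌊αn + γ⌋ : n ∈ A} contains arithmetic progressions of arbitrary finite length. -/
/-- `A ⊆ ℕ` contains arithmetic progressions of arbitrary finite length. -/
def APSet (A : Set ℕ) : Prop :=
  ∀ k : ℕ, ∃ a d : ℕ, 0 < d ∧ ∀ i < k, a + i * d ∈ A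

set_option maxHeartbeats 1000000 in
theorem spectra_aux (α γ : ℝ) (hα : 0 < α) (hγ0 : 0 < γ)
    (k a D0 : ℕ) (hk : 0 < k)
    (hβ : 1 ≤ α * (D0 : ℝ))
    (A : Set ℕ) (P : ℕ) (hP : k * (2*k) ≤ P)
    (hmem : ∀ u, u ≤ P + 2*k + k*(2*k) → a + u * D0 ∈ A)
    (i j : ℕ) (hPi : P ≤ i) (hij : i < j) (hj : j ≤ P + 2*k)
    (hbox : ⌊Int.fract (α * ((a + i * D0 : ℕ) : ℝ) + γ) * (2*(k:ℝ))⌋₊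
          = ⌊Int.fract (α * ((a + j * D0 : ℕ) : ℝ) + γ) * (2*(k:ℝ))⌋₊) :
    ∃ a' d' : ℕ, 0 < d' ∧ ∀ m < k, a' + m * d' ∈ spectrumMap α γ '' A := by
  set β : ℝ := α * D0 with hβdef
  clear_value β
  have hβ0 : (0:ℝ) < β := lt_of_lt_of_le one_pos (hβdef ▸ hβ)
  set y : ℕ → ℝ := fun u => α * ((a + u * D0 : ℕ) : ℝ) + γ with hydef
  have hyspec : ∀ u : ℕ, y u = α * ((a + u * D0 : ℕ) : ℝ) + γ := fun u => rfl
  clear_value y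
  have hbox' : ⌊Int.fract (y i) * (2*(k:ℝ))⌋₊ = ⌊Int.fract (y j) * (2*(k:ℝ))⌋₊ := by
    rw [hyspec i, hyspec j]; exact hbox
  have hy : ∀ u v : ℕ, u ≤ v → y v = y u + ((v - u : ℕ) : ℝ) * β := by
    intro u v huv
    rw [hyspec u, hyspec v, hβdef]
    push_cast [Nat.cast_sub huv]
    ring
  have hypos : ∀ u : ℕ, 0 < y u := by
    intro u
    have h1 : (0:ℝ) ≤ ((a + u*D0 : ℕ):ℝ) := Nat.cast_nonneg _
    have h2 := mul_nonneg hα.le h1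
    rw [hyspec u]; linarith
  have hk1 : (1:ℝ) ≤ (k:ℝ) := by exact_mod_cast hk
  have h2k : (0:ℝ) < 2*(k:ℝ) := by linarith
  set fi : ℝ := Int.fract (y i) with hfidef
  clear_value fi
  set fj : ℝ := Int.fract (y j) with hfjdef
  clear_value fj
  set s : ℕ := j - i with hsdef
  clear_value s
  have hs1 : 1 ≤ s := by omega
  have hs2 : s ≤ 2*k := by omega
  set D : ℤ := ⌊y j⌋ - ⌊y i⌋ with hDdef
  clear_value D
  have hyi : y i = (⌊y i⌋ : ℝ) + fi := by
    rw [hfidef]; exact (Int.floor_add_fract (y i)).symm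
  have hyj : y j = (⌊y j⌋ : ℝ) + fj := by
    rw [hfjdef]; exact (Int.floor_add_fract (y j)).symm
  have hyij : y j = y i + (s:ℝ) * β := by
    have h := hy i j hij.le
    rwa [← hsdef] at h
  have hsb : (s:ℝ) * β = (D:ℝ) + (fj - fi) := by
    have h3 : (D:ℝ) = (⌊y j⌋:ℝ) - (⌊y i⌋:ℝ) := by rw [hDdef]; push_cast; ring
    linarith [hyij]
  have hfi0 : 0 ≤ fi := hfidef ▸ Int.fract_nonneg _
  have hfi1 : fi < 1 := hfidef ▸ Int.fract_lt_one _
  have hfj0 : 0 ≤ fj := hfjdef ▸ Int.fract_nonneg _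
  have hfj1 : fj < 1 := hfjdef ▸ Int.fract_lt_one _
  have hsβ1 : (1:ℝ) ≤ (s:ℝ) * β := by
    have h1 : (1:ℝ) ≤ (s:ℝ) := by exact_mod_cast hs1
    nlinarith
  have hD1 : 1 ≤ D := by
    have h1 : (0:ℝ) < (D:ℝ) := by linarith
    have h2 : (0:ℤ) < D := by exact_mod_cast h1
    omega
  set b : ℕ := ⌊fi * (2*(k:ℝ))⌋₊ with hbdef
  clear_value b
  have hbj : b = ⌊fj * (2*(k:ℝ))⌋₊ := hbox'
  have hb1 : (b:ℝ) ≤ fi * (2*(k:ℝ)) := by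
    rw [hbdef]; exact Nat.floor_le (mul_nonneg hfi0 h2k.le)
  have hb2 : fi * (2*(k:ℝ)) < b + 1 := by
    rw [hbdef]; exact Nat.lt_floor_add_one _
  have hb3 : (b:ℝ) ≤ fj * (2*(k:ℝ)) := by
    rw [hbj]; exact Nat.floor_le (mul_nonneg hfj0 h2k.le)
  have hb4 : fj * (2*(k:ℝ)) < b + 1 := by
    rw [hbj]; exact Nat.lt_floor_add_one _
  have hθp : (fj - fi) * (2*(k:ℝ)) < 1 := by nlinarith [hb1, hb4]
  have hθm : (fi - fj) * (2*(k:ℝ)) < 1 := by nlinarith [hb2, hb3]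
  have hfloor : ∀ (u : ℕ) (c : ℤ) (g : ℝ), y u = (c:ℝ) + g → 0 ≤ g → g < 1 → ⌊y u⌋ = c := by
    intro u c g hgeq h0 h1
    rw [hgeq, Int.floor_eq_iff]
    constructor
    · linarith
    · linarith
  -- forward construction
  have forward : (∀ m : ℕ, m < k → 0 ≤ fi + (m:ℝ)*(fj-fi) ∧ fi + (m:ℝ)*(fj-fi) < 1) →
      ∃ e : ℤ, 0 ≤ e ∧ ∀ m, m < k → ∃ n ∈ A, ⌊α * ((n:ℕ):ℝ) + γ⌋ = e + (m:ℤ) * D := by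
    intro hg
    refine ⟨⌊y i⌋, Int.floor_nonneg.mpr (hypos i).le, ?_⟩
    intro m hm
    obtain ⟨hg0, hg1⟩ := hg m hm
    have hu : i + m*s ≤ P + 2*k + k*(2*k) :=
      Nat.add_le_add (le_trans hij.le hj) (Nat.mul_le_mul hm.le hs2)
    refine ⟨a + (i + m*s)*D0, hmem _ hu, ?_⟩
    have h1 := hy i (i+m*s) (Nat.le_add_right _ _)
    rw [show i+m*s-i = m*s from by omega] at h1
    have heq : y (i+m*s) = ((⌊y i⌋ + (m:ℤ)*D : ℤ):ℝ) + (fi + (m:ℝ)*(fj-fi)) := by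
      push_cast at h1 ⊢
      linear_combination h1 + hyi + (m:ℝ)*hsb
    have hgoal : ⌊y (i+m*s)⌋ = ⌊y i⌋ + (m:ℤ)*D := hfloor _ _ _ heq hg0 hg1
    rw [← hyspec (i+m*s)]
    exact hgoal
  -- backward construction
  have backward : (∀ m : ℕ, m < k →
        0 ≤ fj - ((k:ℝ)-1-(m:ℝ))*(fj-fi) ∧ fj - ((k:ℝ)-1-(m:ℝ))*(fj-fi) < 1) →
      ∃ e : ℤ, 0 ≤ e ∧ ∀ m, m < k → ∃ n ∈ A, ⌊α * ((n:ℕ):ℝ) + γ⌋ = e + (m:ℤ) * D := by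
    intro hg
    have hall : ∀ m, m < k → ⌊y (j - (k-1-m)*s)⌋ = ⌊y j⌋ - ((k:ℤ)-1-(m:ℤ))*D := by
      intro m hm
      obtain ⟨hg0, hg1⟩ := hg m hm
      have hls : (k-1-m)*s ≤ j :=
        le_trans (Nat.mul_le_mul (by omega : k-1-m ≤ k) hs2)
          (le_trans hP (le_trans hPi hij.le))
      have h1 := hy (j - (k-1-m)*s) j (Nat.sub_le _ _)
      rw [show j - (j - (k-1-m)*s) = (k-1-m)*s from by omega] at h1
      have hl : (((k-1-m : ℕ)):ℝ) = (k:ℝ)-1-(m:ℝ) := by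
        have h2 : (k-1-m) + m + 1 = k := by omega
        have h3 : (((k-1-m)+m+1 : ℕ):ℝ) = (k:ℝ) := by rw [h2]
        push_cast at h3
        linarith
      have heq : y (j - (k-1-m)*s)
          = ((⌊y j⌋ - ((k:ℤ)-1-(m:ℤ))*D : ℤ):ℝ) + (fj - ((k:ℝ)-1-(m:ℝ))*(fj-fi)) := by
        push_cast at h1 ⊢
        rw [hl] at h1
        linear_combination -h1 + hyj - ((k:ℝ)-1-(m:ℝ))*hsb
      exact hfloor _ _ _ heq hg0 hg1
    have he0 : (0:ℤ) ≤ ⌊y j⌋ - ((k:ℤ)-1)*D := by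
      have h4 := hall 0 hk
      have h5 : (0:ℤ) ≤ ⌊y (j - (k-1-0)*s)⌋ := Int.floor_nonneg.mpr (hypos _).le
      rw [h4] at h5
      push_cast at h5
      linarith
    refine ⟨⌊y j⌋ - ((k:ℤ)-1)*D, he0, ?_⟩
    intro m hm
    have hu : j - (k-1-m)*s ≤ P + 2*k + k*(2*k) :=
      le_trans (Nat.sub_le _ _) (le_trans hj (Nat.le_add_right _ _))
    refine ⟨a + (j - (k-1-m)*s)*D0, hmem _ hu, ?_⟩
    rw [← hyspec (j - (k-1-m)*s), hall m hm]
    ring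
  have key : ∃ e : ℤ, 0 ≤ e ∧ ∀ m, m < k → ∃ n ∈ A, ⌊α * ((n:ℕ):ℝ) + γ⌋ = e + (m:ℤ) * D := by
    rcases le_or_gt 0 (fj - fi) with hθ | hθ <;> rcases lt_or_ge b k with hbk | hbk
    · -- θ ≥ 0, b < k : forward
      apply forward
      intro m hm
      have hm0 : (0:ℝ) ≤ (m:ℝ) := Nat.cast_nonneg m
      have hm1 : (m:ℝ) ≤ (k:ℝ) - 1 := by
        have h := Nat.succ_le_of_lt hm
        have h' : ((m:ℝ)+1) ≤ (k:ℝ) := by exact_mod_cast h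
        linarith
      have hbk' : (b:ℝ)+1 ≤ (k:ℝ) := by
        have h : b + 1 ≤ k := hbk
        exact_mod_cast h
      constructor
      · exact add_nonneg hfi0 (mul_nonneg hm0 hθ)
      · have hprod : (m:ℝ)*((fj-fi)*(2*(k:ℝ))) ≤ ((k:ℝ)-1)*1 :=
          mul_le_mul hm1 hθp.le (mul_nonneg hθ h2k.le) (by linarith)
        have h1' : (fi + (m:ℝ)*(fj-fi))*(2*(k:ℝ)) < 1*(2*(k:ℝ)) := by nlinarith [hb2]
        exact lt_of_mul_lt_mul_right h1' h2k.le
    · -- θ ≥ 0, k ≤ b : backward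
      apply backward
      intro m hm
      have hm0 : (0:ℝ) ≤ (m:ℝ) := Nat.cast_nonneg m
      have hm1 : (m:ℝ) ≤ (k:ℝ) - 1 := by
        have h := Nat.succ_le_of_lt hm
        have h' : ((m:ℝ)+1) ≤ (k:ℝ) := by exact_mod_cast h
        linarith
      have hbk' : (k:ℝ) ≤ (b:ℝ) := by exact_mod_cast hbk
      have hc0 : (0:ℝ) ≤ (k:ℝ)-1-(m:ℝ) := by linarith
      have hc1 : (k:ℝ)-1-(m:ℝ) ≤ (k:ℝ)-1 := by linarith
      constructor
      · have hprod : ((k:ℝ)-1-(m:ℝ))*((fj-fi)*(2*(k:ℝ))) ≤ ((k:ℝ)-1)*1 :=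
          mul_le_mul hc1 hθp.le (mul_nonneg hθ h2k.le) (by linarith)
        have h0' : (0:ℝ)*(2*(k:ℝ)) ≤ (fj - ((k:ℝ)-1-(m:ℝ))*(fj-fi))*(2*(k:ℝ)) := by
          nlinarith [hb3]
        exact le_of_mul_le_mul_right h0' h2k
      · have h := mul_nonneg hc0 hθ
        linarith
    · -- θ < 0, b < k : backward
      apply backward
      intro m hm
      have hm0 : (0:ℝ) ≤ (m:ℝ) := Nat.cast_nonneg m
      have hm1 : (m:ℝ) ≤ (k:ℝ) - 1 := by
        have h := Nat.succ_le_of_lt hm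
        have h' : ((m:ℝ)+1) ≤ (k:ℝ) := by exact_mod_cast h
        linarith
      have hbk' : (b:ℝ)+1 ≤ (k:ℝ) := by
        have h : b + 1 ≤ k := hbk
        exact_mod_cast h
      have hc0 : (0:ℝ) ≤ (k:ℝ)-1-(m:ℝ) := by linarith
      have hc1 : (k:ℝ)-1-(m:ℝ) ≤ (k:ℝ)-1 := by linarith
      constructor
      · have h := mul_nonpos_of_nonneg_of_nonpos hc0 hθ.le
        linarith
      · have hprod : ((k:ℝ)-1-(m:ℝ))*((fi-fj)*(2*(k:ℝ))) ≤ ((k:ℝ)-1)*1 :=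
          mul_le_mul hc1 hθm.le (mul_nonneg (by linarith) h2k.le) (by linarith)
        have h1' : (fj - ((k:ℝ)-1-(m:ℝ))*(fj-fi))*(2*(k:ℝ)) < 1*(2*(k:ℝ)) := by
          nlinarith [hb4]
        exact lt_of_mul_lt_mul_right h1' h2k.le
    · -- θ < 0, k ≤ b : forward
      apply forward
      intro m hm
      have hm0 : (0:ℝ) ≤ (m:ℝ) := Nat.cast_nonneg m
      have hm1 : (m:ℝ) ≤ (k:ℝ) - 1 := by
        have h := Nat.succ_le_of_lt hm
        have h' : ((m:ℝ)+1) ≤ (k:ℝ) := by exact_mod_cast h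
        linarith
      have hbk' : (k:ℝ) ≤ (b:ℝ) := by exact_mod_cast hbk
      constructor
      · have hprod : (m:ℝ)*((fi-fj)*(2*(k:ℝ))) ≤ ((k:ℝ)-1)*1 :=
          mul_le_mul hm1 hθm.le (mul_nonneg (by linarith) h2k.le) (by linarith)
        have h0' : (0:ℝ)*(2*(k:ℝ)) ≤ (fi + (m:ℝ)*(fj-fi))*(2*(k:ℝ)) := by
          nlinarith [hb1]
        exact le_of_mul_le_mul_right h0' h2k
      · have h := mul_nonpos_of_nonneg_of_nonpos hm0 hθ.le
        linarith
  obtain ⟨e, he, hkey⟩ := key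
  refine ⟨e.toNat, D.toNat, by omega, ?_⟩
  intro m hm
  obtain ⟨n, hnA, hn⟩ := hkey m hm
  refine ⟨n, hnA, ?_⟩
  have hpos : (0:ℝ) ≤ α * (n:ℝ) + γ := by positivity
  have hc : ((⌊α * (n:ℝ) + γ⌋₊ : ℕ) : ℤ) = ⌊α * (n:ℝ) + γ⌋ := Int.natCast_floor_eq_floor hpos
  show ⌊α * (n:ℝ) + γ⌋₊ = e.toNat + m * D.toNat
  have h1 : (e.toNat : ℤ) = e := Int.toNat_of_nonneg he
  have h2 : (D.toNat : ℤ) = D := Int.toNat_of_nonneg (by omega)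
  have h3 : ((⌊α * (n:ℝ) + γ⌋₊ : ℕ):ℤ) = (e.toNat:ℤ) + (m:ℤ)*(D.toNat:ℤ) := by
    rw [hc, hn, h1, h2]
  exact_mod_cast h3

theorem spectra_of_AP (α γ : ℝ) (hα : 0 < α) (hγ0 : 0 < γ) (hγ1 : γ < 1)
    (A : Set ℕ) (hA : APSet A) :
    APSet (spectrumMap α γ '' A) := by
  intro k
  rcases Nat.eq_zero_or_pos k with rfl | hk
  · exact ⟨0, 1, one_pos, fun i hi => absurd hi (by omega)⟩
  set t : ℕ := ⌈1/α⌉₊ + 1 with htdef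
  have ht : 0 < t := Nat.succ_pos _
  have hαt : 1 ≤ α * (t:ℝ) := by
    have h1 : (1/α) ≤ (⌈1/α⌉₊:ℝ) := Nat.le_ceil _
    have h2 : ((⌈1/α⌉₊:ℕ):ℝ) ≤ (t:ℝ) := by
      have : (⌈1/α⌉₊:ℕ) ≤ t := by omega
      exact_mod_cast this
    have h3 : 1/α ≤ (t:ℝ) := le_trans h1 h2
    calc (1:ℝ) = α * (1/α) := by field_simp
    _ ≤ α * t := mul_le_mul_of_nonneg_left h3 hα.le
  set Q : ℕ := k*(2*k) with hQdef
  set M : ℕ := Q + 2*k + Q + 1 with hMdef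
  obtain ⟨a, d, hd, hAP⟩ := hA (t*M)
  set D0 : ℕ := t*d with hD0def
  have hmem : ∀ u, u ≤ Q + 2*k + Q → a + u * D0 ∈ A := by
    intro u hu
    have h1 : u * t < M * t := mul_lt_mul_of_pos_right (by omega) ht
    have h2 : a + u * D0 = a + (u*t)*d := by rw [hD0def]; ring
    rw [h2]
    apply hAP
    rwa [Nat.mul_comm M t] at h1
  have hβ : 1 ≤ α * (D0:ℝ) := by
    have h1 : t ≤ D0 := Nat.le_mul_of_pos_right t hd
    have h2 : (t:ℝ) ≤ (D0:ℝ) := by exact_mod_cast h1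
    have h3 : α * (t:ℝ) ≤ α * (D0:ℝ) := mul_le_mul_of_nonneg_left h2 hα.le
    linarith
  have hk1 : (1:ℝ) ≤ (k:ℝ) := by exact_mod_cast hk
  have h2k : (0:ℝ) < 2*(k:ℝ) := by linarith
  have hmaps : ∀ u ∈ Finset.Icc Q (Q + 2*k),
      (fun v => ⌊Int.fract (α * ((a + v * D0 : ℕ):ℝ) + γ) * (2*(k:ℝ))⌋₊) u
        ∈ Finset.range (2*k) := by
    intro u _
    simp only [Finset.mem_range]
    have hf0 : (0:ℝ) ≤ Int.fract (α * ((a + u * D0 : ℕ):ℝ) + γ) := Int.fract_nonneg _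
    have hf1 : Int.fract (α * ((a + u * D0 : ℕ):ℝ) + γ) < 1 := Int.fract_lt_one _
    rw [Nat.floor_lt (mul_nonneg hf0 h2k.le)]
    have hcast : ((2*k : ℕ):ℝ) = 2*(k:ℝ) := by push_cast; ring
    rw [hcast]
    nlinarith [hf0, hf1, h2k]
  have hcard : (Finset.range (2*k)).card < (Finset.Icc Q (Q+2*k)).card := by
    rw [Finset.card_range, Nat.card_Icc]
    omega
  obtain ⟨i, hi, j, hj, hne, hbox⟩ := Finset.exists_ne_map_eq_of_card_lt_of_maps_to hcard hmaps
  simp only [Finset.mem_Icc] at hi hj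
  rcases Nat.lt_or_ge i j with hij | hij
  · exact spectra_aux α γ hα hγ0 k a D0 hk hβ A Q le_rfl hmem i j hi.1 hij hj.2 hbox
  · have hij' : j < i := by omega
    exact spectra_aux α γ hα hγ0 k a D0 hk hβ A Q le_rfl hmem j i hj.1 hij' hi.2 hbox.symm
end

section
/- Let α > 0 and 0 < γ < 1. If A ⊆ ℕ is a J-set, then the image g_{α,γ}[A] = {⌊αn + γ⌋ : n ∈ A} is a J-set. -/
/-- `A ⊆ ℕ` is a J-set: for every finite nonempty set `F` of sequences there exist
`a ∈ ℕ` and a finite nonempty `H ⊆ ℕ` with `a + ∑_{n ∈ H} f n ∈ A` for all `f ∈ F`. -/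
def JSet (A : Set ℕ) : Prop :=
  ∀ F : Finset (ℕ → ℕ), F.Nonempty →
    ∃ (a : ℕ) (H : Finset ℕ), H.Nonempty ∧ ∀ f ∈ F, a + ∑ n ∈ H, f n ∈ A

open Finset Function

theorem UnitAddCircle.dist_coe_coe (x y : ℝ) :
    dist (x : UnitAddCircle) y = |x - y - round (x - y)| := by
  rw [dist_eq_norm, ← AddCircle.coe_sub, UnitAddCircle.norm_eq]

theorem exists_lt_forall_abs_sub_round_lt {ι : Type*} [Fintype ι] (x : ι → ℕ → ℝ) {ε : ℝ}
    (hε : 0 < ε) (L : ℕ) :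
    ∃ u v, L ≤ u ∧ u < v ∧ ∀ i, |x i v - x i u - round (x i v - x i u)| < ε := by
  obtain ⟨_, φ, hφ, hlim⟩ :=
    CompactSpace.tendsto_subseq fun n i ↦ (x i (L + n) : UnitAddCircle)
  obtain ⟨N, hN⟩ := Metric.cauchySeq_iff'.1 hlim.cauchySeq ε hε
  refine ⟨L + φ N, L + φ (N + 1), by omega, by linarith [hφ N.lt_succ_self], fun i ↦ ?_⟩
  rw [← UnitAddCircle.dist_coe_coe]
  exact (dist_pi_lt_iff hε).1 (hN (N + 1) N.le_succ) i

theorem exists_disjoint_blocks_abs_sum_sub_round_lt {ι : Type*} (F : Finset ι) (s : ι → ℕ → ℝ)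
    {ε : ℕ → ℝ} (hε : ∀ m, 0 < ε m) :
    ∃ B : ℕ → Finset ℕ, (∀ m, (B m).Nonempty) ∧ Pairwise (Disjoint on B) ∧
      ∀ m, ∀ i ∈ F, |∑ k ∈ B m, s i k - round (∑ k ∈ B m, s i k)| < ε m := by
  have hstep : ∀ m L, ∃ uv : ℕ × ℕ, L ≤ uv.1 ∧ uv.1 < uv.2 ∧ ∀ i ∈ F,
      |∑ k ∈ Ico uv.1 uv.2, s i k - round (∑ k ∈ Ico uv.1 uv.2, s i k)| < ε m := by
    intro m L
    obtain ⟨u, v, hLu, huv, h⟩ :=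
      exists_lt_forall_abs_sub_round_lt (fun (i : F) n ↦ ∑ k ∈ range n, s i k) (hε m) L
    refine ⟨(u, v), hLu, huv, fun i hi ↦ ?_⟩
    simpa only [sum_Ico_eq_sub _ huv.le] using h ⟨i, hi⟩
  choose uv hLu huv hsum using hstep
  -- `b (m + 1)` is the right end of the `m`-th block, which starts at or after `b m`
  let b : ℕ → ℕ := fun m ↦ Nat.rec 0 (fun m bm ↦ (uv m bm).2) m
  have hsub : ∀ m, Ico (uv m (b m)).1 (uv m (b m)).2 ⊆ Ico (b m) (b (m + 1)) :=
    fun m ↦ Ico_subset_Ico (hLu m (b m)) le_rfl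
  have hb : Monotone b := monotone_nat_of_le_succ fun m ↦ (hLu m (b m)).trans (huv m (b m)).le
  refine ⟨fun m ↦ Ico (uv m (b m)).1 (uv m (b m)).2, fun m ↦ nonempty_Ico.2 (huv m (b m)),
    fun m m' hmm' ↦ ?_, fun m ↦ hsum m (b m)⟩
  have := hb.pairwise_disjoint_on_Ico_succ hmm'
  rw [Function.onFun, ← coe_Ico, ← coe_Ico, disjoint_coe] at this
  exact this.mono (hsub m) (hsub m')

theorem Irrational.exists_nat_fract_mul_mem_Ioo {α : ℝ} (hα : Irrational α) {a b : ℝ}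
    (ha : 0 ≤ a) (hab : a < b) (hb : b ≤ 1) : ∃ w : ℕ, Int.fract (α * w) ∈ Set.Ioo a b := by
  have hdense : DenseRange fun w : ℕ ↦ w • (α : UnitAddCircle) :=
    denseRange_zsmul_iff_nsmul.1 (AddCircle.denseRange_zsmul_coe_iff.2 (by simpa using hα))
  obtain ⟨w, hw⟩ :=
    hdense.exists_dist_lt (((a + b) / 2 : ℝ) : UnitAddCircle) (half_pos (sub_pos.2 hab))
  rw [← AddCircle.coe_nsmul, dist_comm, UnitAddCircle.dist_coe_coe, abs_lt, nsmul_eq_mul] at hw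
  set n := round (w * α - (a + b) / 2)
  have hfract : Int.fract (α * w) = α * w - n :=
    Int.fract_eq_iff.2 ⟨by linarith, by linarith, n, by ring⟩
  exact ⟨w, by rw [hfract]; constructor <;> linarith⟩

theorem abs_mul_toNat_round_div_sub_lt {α ε x : ℝ} (hα : 0 < α) (hx : 0 ≤ x)
    (h : |x / α - round (x / α)| < ε) : |α * (round (x / α)).toNat - x| < α * ε := by
  have hround : (0 : ℤ) ≤ round (x / α) := by
    rw [round_eq]; exact Int.floor_nonneg.2 (by positivity)
  have hcast : (((round (x / α)).toNat : ℤ) : ℝ) = round (x / α) := by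
    exact_mod_cast Int.toNat_of_nonneg hround
  rw [Int.cast_natCast] at hcast
  have hsub : α * round (x / α) - x = -(α * (x / α - round (x / α))) := by field_simp; ring
  rw [hcast, hsub, abs_neg, abs_mul, abs_of_pos hα]
  exact mul_lt_mul_of_pos_left h hα

theorem Rat.cast_mul_eq_of_abs_sub_lt {q : ℚ} {n x : ℤ} (h : |(q : ℝ) * n - x| < 1 / q.den) :
    (q : ℝ) * n = x := by
  have hden : (0 : ℝ) < q.den := by exact_mod_cast q.pos
  have hq : (q : ℝ) * n - x = ((q.num * n - q.den * x : ℤ) : ℝ) / q.den := by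
    rw [Rat.cast_def]; push_cast; field_simp
  rw [hq, abs_div, abs_of_pos hden, div_lt_div_iff_of_pos_right hden, ← Int.cast_abs,
    ← Int.cast_one, Int.cast_lt, Int.abs_lt_one_iff, sub_eq_zero] at h
  rw [Rat.cast_def, div_mul_eq_mul_div, div_eq_iff hden.ne']
  exact_mod_cast (by rw [h]; ring : q.num * n = x * q.den)

theorem Finset.sum_mem_Ioo_of_nonempty {ι : Type*} {s : Finset ι} (hs : s.Nonempty)
    {f a b : ι → ℝ} (h : ∀ i ∈ s, f i ∈ Set.Ioo (a i) (b i)) :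
    ∑ i ∈ s, f i ∈ Set.Ioo (∑ i ∈ s, a i) (∑ i ∈ s, b i) :=
  ⟨sum_lt_sum_of_nonempty hs fun i hi ↦ (h i hi).1, sum_lt_sum_of_nonempty hs fun i hi ↦ (h i hi).2⟩

theorem sum_add_mem_Ico_of_abs_lt {ι : Type*} {s : Finset ι} (hs : s.Nonempty) {e t δ : ι → ℝ}
    (he : ∀ i ∈ s, |e i| < δ i) (ht : ∀ i ∈ s, t i ∈ Set.Ioo (2 * δ i) (4 * δ i))
    (hδ : ∑ i ∈ s, δ i ≤ 1 / 8) :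
    ∑ i ∈ s, (e i + δ i) ∈ Set.Ico 0 (2 * ∑ i ∈ s, δ i) ∧
      ∑ i ∈ s, (e i + δ i + t i) ∈ Set.Ico (2 * ∑ i ∈ s, δ i) 1 := by
  have h₀ := sum_mem_Ioo_of_nonempty hs (f := fun i ↦ e i + δ i) (a := fun _ ↦ 0)
    (b := fun i ↦ 2 * δ i) fun i hi ↦ by
      have := abs_lt.1 (he i hi); constructor <;> linarith
  have h₁ := sum_mem_Ioo_of_nonempty hs (f := fun i ↦ e i + δ i + t i) (a := fun i ↦ 2 * δ i)
    (b := fun i ↦ 6 * δ i) fun i hi ↦ by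
      have := abs_lt.1 (he i hi); constructor <;> linarith [(ht i hi).1, (ht i hi).2]
  rw [sum_const_zero, ← mul_sum] at h₀
  rw [← mul_sum, ← mul_sum] at h₁
  exact ⟨Set.Ioo_subset_Ico_self h₀, h₁.1.le, by linarith [h₁.2]⟩

theorem exists_nat_floor_add_eq_or {ι : Type*} (s : Finset ι) {X₀ X₁ d : ℝ} {K : ℕ}
    (hX₀ : 0 ≤ X₀) (hX₁ : X₁ = X₀ + K) {y₀ y₁ : ι → ℝ} (hy₀ : ∀ i ∈ s, y₀ i ∈ Set.Ico 0 d)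
    (hy₁ : ∀ i ∈ s, y₁ i ∈ Set.Ico d 1) :
    ∃ c : ℕ, (∀ i ∈ s, ⌊X₀ + y₀ i⌋₊ = c) ∨ (∀ i ∈ s, ⌊X₁ + y₁ i⌋₊ = c) := by
  have hfloor := Nat.floor_le hX₀
  have hfloor' := Nat.lt_floor_add_one X₀
  by_cases h : X₀ + d ≤ ⌊X₀⌋₊ + 1
  · refine ⟨⌊X₀⌋₊, Or.inl fun i hi ↦ ?_⟩
    obtain ⟨h₁, h₂⟩ := hy₀ i hi
    rw [Nat.floor_eq_iff (by linarith)]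
    constructor <;> linarith
  · refine ⟨⌊X₀⌋₊ + 1 + K, Or.inr fun i hi ↦ ?_⟩
    obtain ⟨h₁, h₂⟩ := hy₁ i hi
    have hK : (0 : ℝ) ≤ K := K.cast_nonneg
    rw [hX₁, Nat.floor_eq_iff (by linarith)]
    push_cast
    constructor <;> linarith

theorem spectrumMap_add_sum {α γ : ℝ} {a : ℕ} {H : Finset ℕ} {N T : ℕ → ℕ} {c y : ℕ → ℝ}
    (h : ∀ m ∈ H, α * N m = T m + c m + y m)
    (h₀ : 0 ≤ α * a + γ + ∑ m ∈ H, c m + ∑ m ∈ H, y m) :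
    spectrumMap α γ (a + ∑ m ∈ H, N m) =
      ⌊α * a + γ + ∑ m ∈ H, c m + ∑ m ∈ H, y m⌋₊ + ∑ m ∈ H, T m := by
  rw [spectrumMap, ← Nat.floor_add_natCast h₀]
  congr 1
  push_cast
  rw [mul_add, mul_sum, sum_congr rfl h, sum_add_distrib, sum_add_distrib]
  ring

theorem JSet.exists_mem_image_of_blocks {A : Set ℕ} (hA : JSet A) {J : Type*} [Fintype J]
    [Nonempty J] (g : ℕ → ℕ) {F : Finset (ℕ → ℕ)} (hF : F.Nonempty) {B : ℕ → Finset ℕ}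
    (hB : Pairwise (Disjoint on B)) (hBne : ∀ m, (B m).Nonempty) (N : J → (ℕ → ℕ) → ℕ → ℕ)
    (hN : ∀ (a : ℕ) (H : Finset ℕ), H.Nonempty → ∃ j c, ∀ f ∈ F,
      g (a + ∑ m ∈ H, N j f m) = c + ∑ m ∈ H, ∑ n ∈ B m, f n) :
    ∃ (a : ℕ) (H : Finset ℕ), H.Nonempty ∧ ∀ f ∈ F, a + ∑ n ∈ H, f n ∈ g '' A := by
  classical
  obtain ⟨a, H, hH, hmem⟩ :=
    hA ((univ ×ˢ F).image fun p ↦ N p.1 p.2) ((univ_nonempty.product hF).image _)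
  obtain ⟨j, c, hc⟩ := hN a H hH
  refine ⟨c, H.biUnion B, hH.biUnion fun m _ ↦ hBne m, fun f hf ↦ ⟨_, hmem _
    (mem_image.2 ⟨(j, f), mem_product.2 ⟨mem_univ j, hf⟩, rfl⟩), ?_⟩⟩
  rw [hc f hf, sum_biUnion (hB.set_pairwise _)]

theorem JSet.image_spectrumMap_ratCast {A : Set ℕ} (hA : JSet A) {q : ℚ} (hq : 0 < q) {γ : ℝ}
    (hγ : 0 ≤ γ) : JSet (spectrumMap q γ '' A) := by
  intro F hF
  have hq' : (0 : ℝ) < q := Rat.cast_pos.2 hq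
  obtain ⟨B, hBne, hB, hround⟩ := exists_disjoint_blocks_abs_sum_sub_round_lt F
    (fun f k ↦ (f k : ℝ) / q) (ε := fun _ ↦ 1 / (q * q.den)) fun _ ↦ by positivity
  let T : (ℕ → ℕ) → ℕ → ℕ := fun f m ↦ ∑ n ∈ B m, f n
  have hexact : ∀ f ∈ F, ∀ m, (q : ℝ) * (round ((T f m : ℝ) / q)).toNat = T f m := by
    intro f hf m
    have h := abs_mul_toNat_round_div_sub_lt hq' (T f m).cast_nonneg
      (by simpa only [T, Nat.cast_sum, sum_div] using hround m f hf)
    rw [mul_one_div, div_mul_cancel_left₀ hq'.ne', ← one_div] at h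
    exact_mod_cast Rat.cast_mul_eq_of_abs_sub_lt (x := T f m) (by exact_mod_cast h)
  refine hA.exists_mem_image_of_blocks _ hF hB hBne (J := Unit)
    (fun _ f m ↦ (round ((T f m : ℝ) / q)).toNat) fun a H _ ↦ ⟨(), ⌊q * a + γ⌋₊, fun f hf ↦ ?_⟩
  have h₀ : (0 : ℝ) ≤ q * a + γ := by positivity
  rw [spectrumMap_add_sum (c := 0) (y := 0) (T := T f) (fun m _ ↦ by simp [hexact f hf m])
    (by simpa using h₀)]
  simp [T]

theorem exists_cond_spectrumMap_add_sum_eq {α γ : ℝ} (hα : 0 ≤ α) (hγ : 0 ≤ γ)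
    {F : Finset (ℕ → ℕ)} {T z : (ℕ → ℕ) → ℕ → ℕ} {w : ℕ → ℕ} {δ : ℕ → ℝ} {P : ℕ}
    (hP : 1 ≤ α * P) (hδ : ∀ H : Finset ℕ, ∑ m ∈ H, δ m ≤ 1 / 8)
    (hz : ∀ f ∈ F, ∀ m, |α * z f m - T f m| < δ m)
    (hw : ∀ m, α * w m - ⌊α * w m⌋₊ ∈ Set.Ioo (2 * δ m) (4 * δ m)) {a : ℕ} {H : Finset ℕ}
    (hH : H.Nonempty) :
    ∃ (j : Bool) (c : ℕ), ∀ f ∈ F,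
      spectrumMap α γ (a + ∑ m ∈ H, (z f m + P + cond j (w m) 0)) = c + ∑ m ∈ H, T f m := by
  set X₀ := α * a + γ + ∑ m ∈ H, (α * P - δ m)
  set X₁ := α * a + γ + ∑ m ∈ H, (α * P - δ m + ⌊α * w m⌋₊)
  have hX₀ : 0 ≤ X₀ := by
    have : 0 ≤ ∑ m ∈ H, (α * P - δ m) :=
      sum_nonneg fun m _ ↦ by linarith [show δ m ≤ 1 / 8 by simpa using hδ {m}]
    positivity
  have hX₁ : X₁ = X₀ + (∑ m ∈ H, ⌊α * w m⌋₊ : ℕ) := by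
    push_cast [X₁, X₀, sum_add_distrib]; ring
  have hy := fun f hf ↦ sum_add_mem_Ico_of_abs_lt hH (fun m _ ↦ hz f hf m) (fun m _ ↦ hw m) (hδ H)
  obtain ⟨c, hc | hc⟩ :=
    exists_nat_floor_add_eq_or F hX₀ hX₁ (fun f hf ↦ (hy f hf).1) (fun f hf ↦ (hy f hf).2)
  · refine ⟨false, c, fun f hf ↦ ?_⟩
    rw [spectrumMap_add_sum (T := T f) (c := fun m ↦ α * P - δ m)
      (y := fun m ↦ α * z f m - T f m + δ m)
      (fun m _ ↦ by simp only [cond_false, add_zero]; push_cast; ring)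
      (by linarith [(hy f hf).1.1]), hc f hf]
  · refine ⟨true, c, fun f hf ↦ ?_⟩
    have := (∑ m ∈ H, ⌊α * w m⌋₊).cast_nonneg (α := ℝ)
    rw [spectrumMap_add_sum (T := T f) (c := fun m ↦ α * P - δ m + ⌊α * w m⌋₊)
      (y := fun m ↦ α * z f m - T f m + δ m + (α * w m - ⌊α * w m⌋₊))
      (fun m _ ↦ by simp only [cond_true]; push_cast; ring)
      (by change 0 ≤ X₁ + _; linarith [(hy f hf).1.1, (hy f hf).1.2, (hy f hf).2.1]), hc f hf]

theorem JSet.image_spectrumMap_of_irrational {A : Set ℕ} (hA : JSet A) {α γ : ℝ} (hα : 0 < α)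
    (hirr : Irrational α) (hγ : 0 ≤ γ) : JSet (spectrumMap α γ '' A) := by
  intro F hF
  obtain ⟨δ, hδ0, hδ⟩ :=
    (Set.countable_univ (α := ℕ)).exists_pos_forall_sum_le (by norm_num : (0 : ℝ) < 1 / 8)
  have hδ8 : ∀ m, δ m ≤ 1 / 8 := fun m ↦ by simpa using hδ {m} (Set.subset_univ _)
  obtain ⟨B, hBne, hB, hround⟩ := exists_disjoint_blocks_abs_sum_sub_round_lt F
    (fun f k ↦ (f k : ℝ) / α) (ε := fun m ↦ δ m / α) fun m ↦ div_pos (hδ0 m) hα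
  choose w hw using fun m ↦ hirr.exists_nat_fract_mul_mem_Ioo (a := 2 * δ m) (b := 4 * δ m)
    (by linarith [hδ0 m]) (by linarith [hδ0 m]) (by linarith [hδ8 m])
  have hw' : ∀ m, α * w m - ⌊α * w m⌋₊ ∈ Set.Ioo (2 * δ m) (4 * δ m) := fun m ↦ by
    rw [natCast_floor_eq_intCast_floor (by positivity), Int.self_sub_floor]; exact hw m
  obtain ⟨P, hP⟩ : ∃ P : ℕ, 1 ≤ α * P := by
    obtain ⟨P, hP⟩ := exists_nat_ge (1 / α)
    exact ⟨P, by rwa [div_le_iff₀ hα, mul_comm] at hP⟩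
  let T : (ℕ → ℕ) → ℕ → ℕ := fun f m ↦ ∑ n ∈ B m, f n
  have hz : ∀ f ∈ F, ∀ m, |α * (round ((T f m : ℝ) / α)).toNat - T f m| < δ m := by
    intro f hf m
    have h := abs_mul_toNat_round_div_sub_lt hα (T f m).cast_nonneg
      (by simpa only [T, Nat.cast_sum, sum_div] using hround m f hf)
    rwa [mul_div_cancel₀ _ hα.ne'] at h
  exact hA.exists_mem_image_of_blocks _ hF hB hBne _ fun a H hH ↦
    exists_cond_spectrumMap_add_sum_eq hα.le hγ hP (fun H ↦ hδ H (Set.subset_univ _)) hz hw' hH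

theorem spectra_of_J_general (α γ : ℝ) (hα : 0 < α) (hγ0 : 0 < γ)
    (A : Set ℕ) (hA : JSet A) :
    JSet (spectrumMap α γ '' A) := by
  by_cases hirr : Irrational α
  · exact hA.image_spectrumMap_of_irrational hα hirr hγ0.le
  · obtain ⟨q, rfl⟩ := not_not.1 hirr
    exact hA.image_spectrumMap_ratCast (Rat.cast_pos.1 hα) hγ0.le

theorem spectra_of_J (α γ : ℝ) (hα : 0 < α) (hγ0 : 0 < γ) (hγ1 : γ < 1)
    (A : Set ℕ) (hA : JSet A) :
    JSet (spectrumMap α γ '' A) :=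
  spectra_of_J_general α γ hα hγ0 A hA
end

section
/- Let α > 0 and 0 < γ < 1. If A ⊆ ℕ is an IP-set, i.e. there is a sequence (x_n)_{n≥1} in ℕ with FS((x_n)) ⊆ A, then the image g_{α,γ}[A] = {⌊αn + γ⌋ : n ∈ A} is an IP-set, i.e. there is a sequence (y_n)_{n≥1} in ℕ with FS((y_n)) ⊆ g_{α,γ}[A]. -/
lemma exists_block (α : ℝ) (hα : 0 < α) (x : ℕ → ℕ) (M : ℕ) (δ : ℝ) (hδ : 0 < δ)
    (hδ1 : δ ≤ 1) :
    ∃ ab : ℕ × ℕ, M ≤ ab.1 ∧ ab.1 < ab.2 ∧ ∃ p : ℕ,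
      |α * (∑ n ∈ Finset.Ico ab.1 ab.2, (x n : ℝ)) - p| < δ := by
  set N := ⌈1/δ⌉₊ with hN
  set T : ℕ → ℝ := fun j => α * ∑ n ∈ Finset.Ico M (M+j), (x n : ℝ) with hT
  set box : ℕ → ℕ := fun j => ⌊Int.fract (T j) / δ⌋₊ with hbox
  have hboxlt : ∀ j, box j < N := by
    intro j
    have h0 : 0 ≤ Int.fract (T j) / δ := div_nonneg (Int.fract_nonneg _) hδ.le
    have h1 : Int.fract (T j) / δ < 1 / δ :=
      (div_lt_div_iff_of_pos_right hδ).mpr (Int.fract_lt_one _)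
    exact Nat.floor_lt h0 |>.mpr (h1.trans_le (Nat.le_ceil _))
  obtain ⟨j, -, j', -, hne, heq⟩ :=
    Finset.exists_ne_map_eq_of_card_lt_of_maps_to (s := Finset.range (N+1))
      (t := Finset.range N) (by simp) (fun j _ => Finset.mem_range.mpr (hboxlt j))
  have key : ∀ i, (box i : ℝ) * δ ≤ Int.fract (T i) ∧ Int.fract (T i) < ((box i : ℝ) + 1) * δ := by
    intro i
    have h0 : 0 ≤ Int.fract (T i) / δ := div_nonneg (Int.fract_nonneg _) hδ.le
    constructor
    · have h := Nat.floor_le h0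
      calc (box i : ℝ) * δ ≤ (Int.fract (T i) / δ) * δ := by gcongr
        _ = Int.fract (T i) := by field_simp
    · have h2 : Int.fract (T i) / δ < (box i : ℝ) + 1 := Nat.lt_floor_add_one _
      calc Int.fract (T i) = (Int.fract (T i) / δ) * δ := by field_simp
        _ < ((box i : ℝ) + 1) * δ := by gcongr
  have main : ∀ j j', j < j' → box j = box j' → ∃ ab : ℕ × ℕ, M ≤ ab.1 ∧ ab.1 < ab.2 ∧
      ∃ p : ℕ, |α * (∑ n ∈ Finset.Ico ab.1 ab.2, (x n : ℝ)) - p| < δ := by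
    intro j j' hjj heqb
    have hfr : |Int.fract (T j') - Int.fract (T j)| < δ := by
      rw [abs_sub_lt_iff]
      have k1 := key j
      have k2 := key j'
      rw [heqb] at k1
      constructor <;> linarith [k1.1, k1.2, k2.1, k2.2]
    have hdiff : T j' - T j - ((⌊T j'⌋ - ⌊T j⌋ : ℤ) : ℝ) = Int.fract (T j') - Int.fract (T j) := by
      rw [Int.fract, Int.fract]; push_cast; ring
    have hsum : T j' - T j = α * ∑ n ∈ Finset.Ico (M+j) (M+j'), (x n : ℝ) := by
      have h := Finset.sum_Ico_consecutive (fun n => (x n : ℝ))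
        (Nat.le_add_right M j) (by omega : M + j ≤ M + j')
      rw [hT]
      simp only
      rw [← h]
      ring
    have habs : |α * (∑ n ∈ Finset.Ico (M+j) (M+j'), (x n : ℝ)) - ((⌊T j'⌋ - ⌊T j⌋ : ℤ) : ℝ)| < δ := by
      rw [← hsum, hdiff]
      exact hfr
    have hz : 0 ≤ α * ∑ n ∈ Finset.Ico (M+j) (M+j'), (x n : ℝ) := by positivity
    have hp0 : (0 : ℤ) ≤ ⌊T j'⌋ - ⌊T j⌋ := by
      have h1 := (abs_lt.mp habs).2
      have h2 : ((-1 : ℤ) : ℝ) < ((⌊T j'⌋ - ⌊T j⌋ : ℤ) : ℝ) := by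
        have : ((-1 : ℤ) : ℝ) = -1 := by norm_num
        rw [this]; linarith
      have h3 : (-1 : ℤ) < ⌊T j'⌋ - ⌊T j⌋ := by exact_mod_cast h2
      omega
    refine ⟨(M+j, M+j'), Nat.le_add_right M j, by omega, (⌊T j'⌋ - ⌊T j⌋).toNat, ?_⟩
    have hc : (((⌊T j'⌋ - ⌊T j⌋).toNat : ℕ) : ℝ) = ((⌊T j'⌋ - ⌊T j⌋ : ℤ) : ℝ) := by
      exact_mod_cast congrArg (fun z : ℤ => (z : ℝ)) (Int.toNat_of_nonneg hp0)
    show |α * (∑ n ∈ Finset.Ico (M+j) (M+j'), (x n : ℝ)) - _| < δ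
    rw [hc]
    exact habs
  rcases hne.lt_or_gt with h | h
  · exact main j j' h heq
  · exact main j' j h heq.symm

theorem spectra_of_IP (α γ : ℝ) (hα : 0 < α) (hγ0 : 0 < γ) (hγ1 : γ < 1)
    (A : Set ℕ)
    (hA : ∃ x : ℕ → ℕ, ∀ F : Finset ℕ, F.Nonempty → ∑ n ∈ F, x n ∈ A) :
    ∃ y : ℕ → ℕ, ∀ F : Finset ℕ, F.Nonempty → ∑ n ∈ F, y n ∈ spectrumMap α γ '' A := by
  obtain ⟨x, hx⟩ := hA
  set m := min γ (1 - γ) with hm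
  have hm0 : 0 < m := lt_min hγ0 (by linarith)
  have hm1 : m ≤ γ := min_le_left _ _
  have hm2 : m ≤ 1 - γ := min_le_right _ _
  set δ : ℕ → ℝ := fun k => m / 2 ^ (k + 2) with hδdef
  have hδ0 : ∀ k, 0 < δ k := fun k => by positivity
  have hδ1 : ∀ k, δ k ≤ 1 := by
    intro k
    rw [hδdef]
    simp only
    rw [div_le_one (by positivity)]
    calc m ≤ 1 := hm1.trans hγ1.le
      _ ≤ 2 ^ (k + 2) := one_le_pow₀ (by norm_num)
  have hblock : ∀ k M, ∃ ab : ℕ × ℕ, M ≤ ab.1 ∧ ab.1 < ab.2 ∧ ∃ p : ℕ,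
      |α * (∑ n ∈ Finset.Ico ab.1 ab.2, (x n : ℝ)) - p| < δ k :=
    fun k M => exists_block α hα x M (δ k) (hδ0 k) (hδ1 k)
  let g : ℕ → ℕ × ℕ := fun k => Nat.rec ((hblock 0 0).choose)
    (fun k ih => (hblock (k+1) ih.2).choose) k
  have hg0 : ∀ k, (g k).1 < (g k).2 ∧ ∃ p : ℕ,
      |α * (∑ n ∈ Finset.Ico (g k).1 (g k).2, (x n : ℝ)) - p| < δ k := by
    intro k
    cases k with
    | zero => exact ⟨((hblock 0 0).choose_spec).2.1, ((hblock 0 0).choose_spec).2.2⟩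
    | succ k =>
      have h := (hblock (k+1) (g k).2).choose_spec
      exact ⟨h.2.1, h.2.2⟩
  have hgs : ∀ k, (g k).2 ≤ (g (k+1)).1 := fun k => ((hblock (k+1) (g k).2).choose_spec).1
  have hmono : ∀ k l, k < l → (g k).2 ≤ (g l).1 := by
    intro k l h
    induction l with
    | zero => omega
    | succ l ih =>
      rcases Nat.lt_succ_iff_lt_or_eq.mp h with h' | h'
      · exact (ih h').trans ((hg0 l).1.le.trans (hgs l))
      · subst h'; exact hgs k
  set z : ℕ → ℕ := fun k => ∑ n ∈ Finset.Ico (g k).1 (g k).2, x n with hzdef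
  have hp' : ∀ k, ∃ p : ℕ, |α * (z k : ℝ) - p| < δ k := by
    intro k
    obtain ⟨p, hp⟩ := (hg0 k).2
    exact ⟨p, by rw [hzdef]; push_cast; exact hp⟩
  choose p hp using hp'
  refine ⟨p, ?_⟩
  intro F hF
  set S : Finset ℕ := F.biUnion (fun k => Finset.Ico (g k).1 (g k).2) with hSdef
  have hdisj : (F : Set ℕ).PairwiseDisjoint (fun k => Finset.Ico (g k).1 (g k).2) := by
    intro k _ l _ hkl
    rcases hkl.lt_or_gt with h | h
    · refine Finset.disjoint_left.mpr ?_
      intro n hn hn'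
      rw [Finset.mem_Ico] at hn hn'
      have := hmono k l h
      omega
    · refine Finset.disjoint_left.mpr ?_
      intro n hn hn'
      rw [Finset.mem_Ico] at hn hn'
      have := hmono l k h
      omega
  have hzsum : ∑ n ∈ S, x n = ∑ k ∈ F, z k := Finset.sum_biUnion hdisj
  have hSne : S.Nonempty := by
    obtain ⟨k, hk⟩ := hF
    exact ⟨(g k).1, Finset.mem_biUnion.mpr ⟨k, hk, Finset.mem_Ico.mpr ⟨le_refl _, (hg0 k).1⟩⟩⟩
  have hmem : ∑ k ∈ F, z k ∈ A := hzsum ▸ hx S hSne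
  refine ⟨∑ k ∈ F, z k, hmem, ?_⟩
  -- estimate
  have hest : |α * (∑ k ∈ F, (z k : ℝ)) - ∑ k ∈ F, (p k : ℝ)| ≤ m / 2 := by
    rw [Finset.mul_sum, ← Finset.sum_sub_distrib]
    set N := (F.sup id) + 1 with hN
    have hFsub : F ⊆ Finset.range N := by
      intro k hk
      rw [Finset.mem_range, hN]
      exact Nat.lt_succ_of_le (Finset.le_sup (f := id) hk)
    calc |∑ k ∈ F, (α * (z k : ℝ) - p k)| ≤ ∑ k ∈ F, |α * (z k : ℝ) - p k| :=
          Finset.abs_sum_le_sum_abs _ _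
      _ ≤ ∑ k ∈ F, δ k := Finset.sum_le_sum (fun k _ => (hp k).le)
      _ ≤ ∑ k ∈ Finset.range N, δ k :=
          Finset.sum_le_sum_of_subset_of_nonneg hFsub (fun k _ _ => (hδ0 k).le)
      _ = ∑ k ∈ Finset.range N, (m / 4) * (1/2 : ℝ)^k := by
          refine Finset.sum_congr rfl (fun k _ => ?_)
          rw [hδdef]
          simp only
          rw [show ((1:ℝ)/2)^k = 1/2^k by rw [div_pow, one_pow], pow_add]
          rw [mul_one_div, div_div, mul_comm ((4:ℝ)) (2^k)]
          norm_num
      _ = (m / 4) * ∑ k ∈ Finset.range N, (1/2 : ℝ)^k := by rw [Finset.mul_sum]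
      _ ≤ (m / 4) * 2 := by
          gcongr
          exact sum_geometric_two_le N
      _ = m / 2 := by ring
  have habs := abs_le.mp hest
  show spectrumMap α γ (∑ k ∈ F, z k) = ∑ k ∈ F, p k
  unfold spectrumMap
  have hcast : α * ((∑ k ∈ F, z k : ℕ) : ℝ) = α * (∑ k ∈ F, (z k : ℝ)) := by push_cast; ring
  rw [hcast]
  rw [Nat.floor_eq_iff (by nlinarith [habs.1, habs.2] : (0:ℝ) ≤ α * (∑ k ∈ F, (z k : ℝ)) + γ)]
  push_cast
  constructor
  · linarith [habs.1]
  · linarith [habs.2]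
end

section
/- Let α > 0 and define f_α : ℕ → ℝ/ℤ by f_α(n) = αn mod 1. If p is an idempotent ultrafilter on ℕ (i.e. p + p = p), then the limit of f_α along p equals 0 in ℝ/ℤ. -/
/-- `f_α : ℕ → ℝ/ℤ`, `f_α(n) = α n mod 1`. -/
noncomputable def circMap (α : ℝ) (n : ℕ) : UnitAddCircle := ((α * n : ℝ) : UnitAddCircle)

/-- The ultrafilter sum: `A ∈ usum p q ↔ {x : {y : x + y ∈ A} ∈ q} ∈ p`. -/
def usum (p q : Ultrafilter ℕ) : Ultrafilter ℕ :=
  p.bind fun x => q.map fun y => x + y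

/-!
Since `n ↦ α n` is additive, if it has limit `z` along `p` then it has limit `z + z` along
`p + p`: a neighbourhood of `z + z` contains `V + W` for neighbourhoods `V`, `W` of `z`, and the
defining formula of the ultrafilter sum does the rest. The limit exists by compactness, so
idempotence of `p` and uniqueness of limits give `z + z = z`, that is `z = 0`.
-/

open Filter Topology

theorem AddMonoidHom.tendsto_usum {G : Type*} [AddMonoid G] [TopologicalSpace G]
    [ContinuousAdd G] (f : ℕ →+ G) {p q : Ultrafilter ℕ} {a b : G}
    (ha : Tendsto f p (𝓝 a)) (hb : Tendsto f q (𝓝 b)) :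
    Tendsto f (usum p q) (𝓝 (a + b)) := by
  intro U hU
  have hU' : (fun c : G × G => c.1 + c.2) ⁻¹' U ∈ 𝓝 a ×ˢ 𝓝 b :=
    nhds_prod_eq (x := a) (y := b) ▸ continuous_add.tendsto (a, b) hU
  obtain ⟨V, hV, W, hW, hVW⟩ := mem_prod_iff.mp hU'
  change {x | {y | f (x + y) ∈ U} ∈ q} ∈ p
  filter_upwards [ha hV] with x hx
  filter_upwards [hb hW] with y hy
  simpa only [Set.mem_preimage, map_add] using hVW (Set.mk_mem_prod hx hy)

theorem AddMonoidHom.tendsto_zero_of_usum_self {G : Type*} [AddLeftCancelMonoid G]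
    [TopologicalSpace G] [ContinuousAdd G] [CompactSpace G] [T2Space G] (f : ℕ →+ G)
    {p : Ultrafilter ℕ} (hp : usum p p = p) : Tendsto f p (𝓝 0) := by
  set z := (p.map f).lim
  have hz : Tendsto f p (𝓝 z) := (p.map f).le_nhds_lim
  have hzz : z + z = z := tendsto_nhds_unique (hp ▸ f.tendsto_usum hz hz) hz
  rwa [add_eq_left.mp hzz] at hz

theorem circMap_eq_nsmul (α : ℝ) (n : ℕ) : circMap α n = n • (α : UnitAddCircle) := by
  rw [circMap, mul_comm, ← nsmul_eq_mul, AddCircle.coe_nsmul]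

theorem circMap_idempotent_limit_zero_general (α : ℝ)
    (p : Ultrafilter ℕ) (hp : usum p p = p) :
    Filter.Tendsto (circMap α) (p : Filter ℕ) (nhds 0) := by
  have hcirc : circMap α = multiplesHom UnitAddCircle (α : UnitAddCircle) :=
    funext (circMap_eq_nsmul α)
  rw [hcirc]
  exact AddMonoidHom.tendsto_zero_of_usum_self _ hp

theorem circMap_idempotent_limit_zero (α : ℝ) (hα : 0 < α)
    (p : Ultrafilter ℕ) (hp : usum p p = p) :
    Filter.Tendsto (circMap α) (p : Filter ℕ) (nhds 0) :=
  circMap_idempotent_limit_zero_general α p hp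
end

section
/- Let α > 0 and 0 < γ < 1. Let h_α : ℕ → ℕ be h_α(n) = ⌊αn + 1/2⌋ (the nearest integer to αn) and g_{α,γ}(n) = ⌊αn + γ⌋. If p is an ultrafilter on ℕ such that the limit of n ↦ αn mod 1 along p equals 0 in ℝ/ℤ, then the pushforward ultrafilters coincide: {A : g_{α,γ}⁻¹[A] ∈ p} = {A : h_α⁻¹[A] ∈ p}. -/
/-- `h_α(n) = ⌊α n + 1/2⌋`, the nearest integer to `α n`. -/
noncomputable def nearestMap (α : ℝ) (n : ℕ) : ℕ := ⌊α * n + 1/2⌋₊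

lemma floor_eq_of_near (x : ℝ) (hx : 0 ≤ x) (c ε : ℝ)
    (hε1 : ε ≤ c) (hε2 : ε ≤ 1 - c) (h : |x - round x| < ε) :
    ⌊x + c⌋₊ = (round x).toNat := by
  have hεpos : 0 < ε := lt_of_le_of_lt (abs_nonneg _) h
  have hε1' : ε ≤ 1 := by linarith [lt_of_lt_of_le hεpos hε1]
  have hr : (0:ℤ) ≤ round x := by
    by_contra hneg
    push_neg at hneg
    have h1 : (round x : ℝ) ≤ -1 := by
      have : round x ≤ -1 := by omega
      exact_mod_cast this
    have : (1:ℝ) ≤ |x - round x| := by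
      rw [abs_of_nonneg (by linarith)]; linarith
    linarith
  have hcast : ((round x).toNat : ℝ) = (round x : ℝ) := by
    exact_mod_cast Int.toNat_of_nonneg hr
  have habs := abs_lt.mp h
  rw [Nat.floor_eq_iff (by linarith [hε1, habs.2] : (0:ℝ) ≤ x + c)]
  constructor
  · rw [hcast]; linarith [habs.1]
  · rw [hcast]; linarith [habs.2]

theorem pushforward_eq_on_Z_alpha (α γ : ℝ) (hα : 0 < α) (hγ0 : 0 < γ) (hγ1 : γ < 1)
    (p : Ultrafilter ℕ)
    (hp : Filter.Tendsto (circMap α) (p : Filter ℕ) (nhds 0)) :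
    Ultrafilter.map (spectrumMap α γ) p = Ultrafilter.map (nearestMap α) p := by
  set ε := min γ (min (1 - γ) 2⁻¹) with hεdef
  have hεpos : 0 < ε := lt_min hγ0 (lt_min (by linarith) (by norm_num))
  have h1 : ∀ᶠ n in (p : Filter ℕ), ‖circMap α n‖ < ε :=
    (NormedAddCommGroup.tendsto_nhds_zero.mp hp) ε hεpos
  have hkey : ∀ᶠ n in (p : Filter ℕ), spectrumMap α γ n = nearestMap α n := by
    filter_upwards [h1] with n hn
    have hx : 0 ≤ α * n := by positivity
    have hnorm : ‖circMap α n‖ = |α * n - round (α * n)| := by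
      rw [circMap, AddCircle.norm_eq]
      norm_num
    rw [hnorm] at hn
    rw [spectrumMap, nearestMap,
      floor_eq_of_near _ hx γ ε (min_le_left _ _)
        (le_trans (min_le_right _ _) (min_le_left _ _)) hn,
      floor_eq_of_near _ hx (1/2) ε
        (by rw [show (1:ℝ)/2 = 2⁻¹ by norm_num]
            exact le_trans (min_le_right _ _) (min_le_right _ _))
        (by rw [show (1:ℝ) - 1/2 = 2⁻¹ by norm_num]
            exact le_trans (min_le_right _ _) (min_le_right _ _)) hn]
  apply Ultrafilter.coe_injective
  rw [Ultrafilter.coe_map, Ultrafilter.coe_map]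
  exact Filter.map_congr hkey
end

section
/- Let α > 0 and let h_α(n) = ⌊αn + 1/2⌋ and h_{1/α}(n) = ⌊n/α + 1/2⌋. Suppose p and q are ultrafilters on ℕ lying in Z_α, i.e. the limit of n ↦ αn mod 1 along each of them is 0 in ℝ/ℤ. Then: (i) the pushforward h̃_α(p) = {A : h_α⁻¹[A] ∈ p} lies in Z_{1/α}; (ii) h̃_{1/α}(h̃_α(p)) = p; and (iii) h̃_α(p + q) = h̃_α(p) + h̃_α(q). -/
/-!
Write `ε(n) = α n - h_α(n)`; since `h_α(n)` is the nearest integer to `α n`, `‖α n mod 1‖ = |ε(n)|`,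
so `p ∈ Z_α` says exactly that `ε → 0` along `p`. Whenever `|ε(n)| < α / 2` the natural number `n`
lies within `1/2` of `h_α(n) / α`, so `h_{1/α}(h_α(n)) = n`, and then
`h_α(n) / α mod 1 = -ε(n) / α → 0`. Whenever `|ε(m)|, |ε(n)| < 1/4` the integer `h_α(m) + h_α(n)`
lies within `1/2` of `α (m + n)`, so `h_α(m + n) = h_α(m) + h_α(n)`; as this holds for `p`-most `m`
and `q`-most `n`, `h̃_α` is additive on `Z_α`.
-/

open Filter Topology

lemma mem_usum {p q : Ultrafilter ℕ} {A : Set ℕ} :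
    A ∈ usum p q ↔ {m | {n | m + n ∈ A} ∈ q} ∈ p := Iff.rfl

lemma map_usum_of_eventually_add {f : ℕ → ℕ} {p q : Ultrafilter ℕ}
    (hf : ∀ᶠ m in (p : Filter ℕ), ∀ᶠ n in (q : Filter ℕ), f (m + n) = f m + f n) :
    (usum p q).map f = usum (p.map f) (q.map f) := by
  ext A
  simp only [Ultrafilter.mem_map, mem_usum]
  refine eventually_congr ?_
  filter_upwards [hf] with m hm
  refine eventually_congr ?_
  filter_upwards [hm] with n hn
  simp only [Set.mem_preimage, hn]

lemma Ultrafilter.map_map_eq_self_of_eventually {X Y : Type*} {f : X → Y} {g : Y → X}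
    {p : Ultrafilter X} (h : ∀ᶠ x in (p : Filter X), g (f x) = x) : (p.map f).map g = p := by
  apply Ultrafilter.coe_injective
  rw [Ultrafilter.coe_map, Ultrafilter.coe_map, Filter.map_map]
  exact (Filter.map_congr h).trans Filter.map_id

lemma nearestMap_eq_of_abs_sub_lt {α : ℝ} {n m : ℕ} (h : |α * n - m| < 1/2) :
    nearestMap α n = m := by
  obtain ⟨hlo, hhi⟩ := abs_lt.mp h
  rw [nearestMap, Nat.floor_eq_iff (by linarith [(m.cast_nonneg : (0 : ℝ) ≤ m)])]
  constructor <;> linarith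

lemma natCast_nearestMap {α : ℝ} (hα : 0 ≤ α) (n : ℕ) : (nearestMap α n : ℝ) = round (α * n) := by
  rw [nearestMap, natCast_floor_eq_intCast_floor (by positivity), round_eq]

lemma norm_circMap {α : ℝ} (hα : 0 ≤ α) (n : ℕ) : ‖circMap α n‖ = |α * n - nearestMap α n| := by
  rw [circMap, UnitAddCircle.norm_eq, natCast_nearestMap hα]

lemma tendsto_circMap_zero_iff {α : ℝ} (hα : 0 ≤ α) {l : Filter ℕ} :
    Tendsto (circMap α) l (𝓝 0) ↔ Tendsto (fun n ↦ α * n - nearestMap α n) l (𝓝 0) := by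
  rw [tendsto_zero_iff_norm_tendsto_zero, tendsto_zero_iff_norm_tendsto_zero 
    (f := fun n : ℕ ↦ α * n - (nearestMap α n : ℝ))]
  simp only [norm_circMap hα, Real.norm_eq_abs]

lemma nearestMap_inv_eq_of_abs_sub_lt {α : ℝ} (hα : 0 < α) {n m : ℕ} (h : |α * n - m| < α / 2) :
    nearestMap (1 / α) m = n := by
  apply nearestMap_eq_of_abs_sub_lt
  have : 1 / α * m - n = -(α * n - m) / α := by field_simp; ring
  rwa [this, abs_div, abs_neg, abs_of_pos hα, div_lt_iff₀ hα, one_div_mul_eq_div]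

lemma nearestMap_add_of_abs_sub_lt {α : ℝ} {m n : ℕ} (hm : |α * m - nearestMap α m| < 1/4)
    (hn : |α * n - nearestMap α n| < 1/4) :
    nearestMap α (m + n) = nearestMap α m + nearestMap α n := by
  apply nearestMap_eq_of_abs_sub_lt
  calc |α * ↑(m + n) - ↑(nearestMap α m + nearestMap α n)|
      = |(α * m - nearestMap α m) + (α * n - nearestMap α n)| := by push_cast; ring_nf
    _ ≤ |α * m - nearestMap α m| + |α * n - nearestMap α n| := abs_add_le _ _
    _ < 1/2 := by linarith

theorem nearestMap_iso_on_Z_alpha (α : ℝ) (hα : 0 < α) (p q : Ultrafilter ℕ)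
    (hp : Filter.Tendsto (circMap α) (p : Filter ℕ) (nhds 0))
    (hq : Filter.Tendsto (circMap α) (q : Filter ℕ) (nhds 0)) :
    Filter.Tendsto (circMap (1/α)) ((Ultrafilter.map (nearestMap α) p : Ultrafilter ℕ) : Filter ℕ)
        (nhds 0) ∧
    Ultrafilter.map (nearestMap (1/α)) (Ultrafilter.map (nearestMap α) p) = p ∧
    Ultrafilter.map (nearestMap α) (usum p q) =
      usum (Ultrafilter.map (nearestMap α) p) (Ultrafilter.map (nearestMap α) q) := by
  have hεp := (tendsto_circMap_zero_iff hα.le).1 hp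
  have hεq := (tendsto_circMap_zero_iff hα.le).1 hq
  have small : ∀ {r : Ultrafilter ℕ}, Tendsto (fun n ↦ α * n - nearestMap α n) r (𝓝 0) →
      ∀ {δ : ℝ}, 0 < δ → ∀ᶠ n in (r : Filter ℕ), |α * n - nearestMap α n| < δ :=
    fun hε _ hδ ↦ by simpa using hε.abs.eventually_lt_const (by simpa using hδ)
  have hinv : ∀ᶠ n in (p : Filter ℕ), nearestMap (1 / α) (nearestMap α n) = n :=
    (small hεp (half_pos hα)).mono fun _ ↦ nearestMap_inv_eq_of_abs_sub_lt hα
  refine ⟨?_, Ultrafilter.map_map_eq_self_of_eventually hinv, ?_⟩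
  · rw [tendsto_circMap_zero_iff (by positivity), Ultrafilter.coe_map, tendsto_map'_iff]
    have hlim : Tendsto (fun n : ℕ ↦ -(α * n - nearestMap α n) / α) p (𝓝 0) := by
      simpa using hεp.neg.div_const α
    refine hlim.congr' (hinv.mono fun n hn ↦ ?_)
    simp only [Function.comp_apply, hn]
    field_simp
    ring
  · have quarter : (0 : ℝ) < 1/4 := by norm_num
    refine map_usum_of_eventually_add ((small hεp quarter).mono fun m hm ↦ ?_)
    exact (small hεq quarter).mono fun n hn ↦ nearestMap_add_of_abs_sub_lt hm hn
end

section
/- Let S be a nonempty set and let F be a family of subsets of S (nonempty, upward hereditary) with the Ramsey property. Then for A ⊆ S, A ∈ F if and only if there exists an ultrafilter p on S with A ∈ p and every member of p belonging to F. -/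
theorem mem_family_iff_ultrafilter (S : Type*) [Nonempty S]
    (F : Set (Set S)) (hFne : F.Nonempty)
    (hFmem : ∀ A ∈ F, A.Nonempty)
    (hFup : ∀ A B : Set S, A ∈ F → A ⊆ B → B ∈ F)
    (hFRamsey : ∀ A ∈ F, ∀ A₁ A₂ : Set S, A = A₁ ∪ A₂ → A₁ ∈ F ∨ A₂ ∈ F)
    (A : Set S) :
    A ∈ F ↔ ∃ p : Ultrafilter S, A ∈ p ∧ ∀ B ∈ p, B ∈ F := by
  constructor
  · intro hA
    -- the dual filter
    set D : Filter S :=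
      { sets := {B | Bᶜ ∉ F}
        univ_sets := by
          simp only [Set.mem_setOf_eq, Set.compl_univ]
          intro h
          exact Set.not_nonempty_empty (hFmem _ h)
        sets_of_superset := by
          intro B B' hB hsub hB'
          exact hB (hFup _ _ hB' (Set.compl_subset_compl.mpr hsub))
        inter_sets := by
          intro B C hB hC h
          rcases hFRamsey _ h Bᶜ Cᶜ (by rw [Set.compl_inter]) with h1 | h1
          · exact hB h1
          · exact hC h1 } with hD
    have hDmem : ∀ B, B ∈ D ↔ Bᶜ ∉ F := fun B => Iff.rfl
    have hne : (D ⊓ Filter.principal A).NeBot := by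
      rw [Filter.inf_principal_neBot_iff]
      intro B hB
      have : B ∩ A ∈ F := by
        rcases hFRamsey _ hA (A ∩ B) (A \ B) (by ext x; by_cases hx : x ∈ B <;> simp [hx]) with h1 | h1
        · exact Set.inter_comm A B ▸ h1
        · exact absurd (hFup _ _ h1 (Set.diff_subset_compl A B)) ((hDmem B).mp hB)
      exact hFmem _ this
    refine ⟨Ultrafilter.of (D ⊓ Filter.principal A), ?_, ?_⟩
    · exact Ultrafilter.of_le _ (Filter.mem_inf_of_right (Filter.mem_principal_self A))
    · intro B hB
      by_contra hBF
      have hBc : Bᶜ ∈ D := (hDmem Bᶜ).mpr (by rwa [compl_compl])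
      have : Bᶜ ∈ Ultrafilter.of (D ⊓ Filter.principal A) :=
        Ultrafilter.of_le _ (Filter.mem_inf_of_left hBc)
      exact (Ultrafilter.of (D ⊓ Filter.principal A)).compl_notMem hB this
  · rintro ⟨p, hAp, hp⟩
    exact hp A hAp
end

section
/- Let S be a semigroup and let F be a family of subsets of S (nonempty, upward hereditary) with the Ramsey property, and suppose β(F), the set of ultrafilters on S all of whose members lie in F, is nonempty. Then β(F) is a left ideal of the Stone–Čech semigroup of ultrafilters (i.e. for every ultrafilter q on S and every p ∈ β(F), the product q·p lies in β(F)) if and only if F is left shift-invariant, i.e. sE = {st : t ∈ E} ∈ F for all s ∈ S and E ∈ F. -/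
/-!
For a Ramsey family `F`, the sets whose complement is not in `F` form a filter, and every
`A ∈ F` meets each of its members; an ultrafilter refining this filter and containing `A`
therefore lies in `β(F)`. Taking `q` principal at `s` then gives `sE ∈ F` from the left ideal
property, since `(pure s)·p` is the image of `p` under `t ↦ st`. Conversely, if `A ∈ q·p` then
`s⁻¹A ∈ p ⊆ F` for some `s`, and `s(s⁻¹A) ⊆ A`.
-/

/-- The ultrafilter product on a semigroup:
`A ∈ uprod q p ↔ {x : {y : x * y ∈ A} ∈ p} ∈ q`. -/
def uprod {S : Type*} [Semigroup S] (q p : Ultrafilter S) : Ultrafilter S :=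
  q.bind fun x => p.map fun y => x * y

lemma mem_uprod_iff {S : Type*} [Semigroup S] {q p : Ultrafilter S} {A : Set S} :
    A ∈ uprod q p ↔ {x | (x * ·) ⁻¹' A ∈ p} ∈ q := Iff.rfl

lemma mem_uprod_pure_iff {S : Type*} [Semigroup S] {s : S} {p : Ultrafilter S} {A : Set S} :
    A ∈ uprod (pure s) p ↔ (s * ·) ⁻¹' A ∈ p := Iff.rfl

section RamseyFamily

open Filter

variable {S : Type*} {F : Set (Set S)}

def ramseyDualFilter (hFmem : ∀ A ∈ F, A.Nonempty)
    (hFup : ∀ A B : Set S, A ∈ F → A ⊆ B → B ∈ F)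
    (hFRamsey : ∀ A ∈ F, ∀ A₁ A₂ : Set S, A = A₁ ∪ A₂ → A₁ ∈ F ∨ A₂ ∈ F) : Filter S :=
  comk (· ∉ F) (fun h => (hFmem ∅ h).ne_empty rfl)
    (fun _ hB _ hCB hC => hB (hFup _ _ hC hCB))
    (fun B₁ hB₁ B₂ hB₂ hB => (hFRamsey _ hB B₁ B₂ rfl).elim hB₁ hB₂)

lemma exists_ultrafilter_mem_subset_of_mem (hFmem : ∀ A ∈ F, A.Nonempty)
    (hFup : ∀ A B : Set S, A ∈ F → A ⊆ B → B ∈ F)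
    (hFRamsey : ∀ A ∈ F, ∀ A₁ A₂ : Set S, A = A₁ ∪ A₂ → A₁ ∈ F ∨ A₂ ∈ F)
    {A : Set S} (hA : A ∈ F) : ∃ p : Ultrafilter S, A ∈ p ∧ ∀ B ∈ p, B ∈ F := by
  set G := ramseyDualFilter hFmem hFup hFRamsey
  have hG : ∀ {B : Set S}, B ∈ G ↔ Bᶜ ∉ F := mem_comk
  have : (G ⊓ 𝓟 A).NeBot := inf_principal_neBot_iff.2 fun B hB => by
    by_contra hBA
    exact hG.1 hB (hFup _ _ hA fun x hxA hxB => hBA ⟨x, hxB, hxA⟩)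
  have hle : (Ultrafilter.of (G ⊓ 𝓟 A) : Filter S) ≤ G ⊓ 𝓟 A := Ultrafilter.of_le _
  refine ⟨Ultrafilter.of (G ⊓ 𝓟 A), hle (mem_inf_of_right (mem_principal_self A)),
    fun B hB => ?_⟩
  by_contra hBF
  have hBc : Bᶜ ∈ G := hG.2 (by rwa [compl_compl])
  exact Ultrafilter.compl_notMem_iff.2 hB (hle (mem_inf_of_left hBc))

end RamseyFamily

theorem beta_F_left_ideal_iff_shift_invariant_general (S : Type*) [Semigroup S]
    (F : Set (Set S))
    (hFmem : ∀ A ∈ F, A.Nonempty)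
    (hFup : ∀ A B : Set S, A ∈ F → A ⊆ B → B ∈ F)
    (hFRamsey : ∀ A ∈ F, ∀ A₁ A₂ : Set S, A = A₁ ∪ A₂ → A₁ ∈ F ∨ A₂ ∈ F) :
    (∀ q p : Ultrafilter S, (∀ A ∈ p, A ∈ F) → ∀ A ∈ uprod q p, A ∈ F) ↔
      (∀ s : S, ∀ E ∈ F, (fun t => s * t) '' E ∈ F) := by
  constructor
  · intro hideal s E hE
    obtain ⟨p, hEp, hpF⟩ := exists_ultrafilter_mem_subset_of_mem hFmem hFup hFRamsey hE
    exact hideal (pure s) p hpF _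
      (mem_uprod_pure_iff.2 (p.mem_of_superset hEp (Set.subset_preimage_image _ E)))
  · intro hshift q p hpF A hA
    obtain ⟨s, hs⟩ := q.nonempty_of_mem (mem_uprod_iff.1 hA)
    exact hFup _ _ (hshift s _ (hpF _ hs)) (Set.image_preimage_subset _ A)

theorem beta_F_left_ideal_iff_shift_invariant (S : Type*) [Semigroup S]
    (F : Set (Set S)) (hFne : F.Nonempty)
    (hFmem : ∀ A ∈ F, A.Nonempty)
    (hFup : ∀ A B : Set S, A ∈ F → A ⊆ B → B ∈ F)
    (hFRamsey : ∀ A ∈ F, ∀ A₁ A₂ : Set S, A = A₁ ∪ A₂ → A₁ ∈ F ∨ A₂ ∈ F)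
    (hβne : ∃ p : Ultrafilter S, ∀ A ∈ p, A ∈ F) :
    (∀ q p : Ultrafilter S, (∀ A ∈ p, A ∈ F) → ∀ A ∈ uprod q p, A ∈ F) ↔
      (∀ s : S, ∀ E ∈ F, (fun t => s * t) '' E ∈ F) :=
  beta_F_left_ideal_iff_shift_invariant_general S F hFmem hFup hFRamsey
end
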